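/- arXiv:2502.07889 — 6 statements merged into one kernel-verified Lean document; each statement's English description precedes it below -/
import Mathlib

section
/- For every real number x > 0, the double series over integers k, k' ≥ 1 with k + k' ≥ 3 of the terms x^(2(k+k')) / ((2k)!·(2k')!) · ( 1/(2(k+k')+1) − 1/((2k+1)(2k'+1)) ) converges and its sum equals (1/2)·( 1 + sinh(2x)/(2x) − 2·(sinh(x)/x)² − 2x⁴/45 ). -/
/-!
Write `c k = x^(2k)/(2k)!` and `s k = x^(2k)/(2k+1)!`, so that the summand is
`c k c k' / (2(k+k')+1) - s k s k'`. Over all pairs `k, k' ≥ 0` the first part is the termwise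
expansion of `∫₀¹ cosh² (x t) dt = (1 + sinh (2x)/(2x))/2` (grouping by `k + k'` reduces it to
the sum of the even binomial coefficients `C(2n, 2k)`, which is `2^(2n-1)`), and the second part
sums to `(sinh x / x)²`. The summand vanishes when `k = 0` or `k' = 0` and equals `x⁴/45` at
`(1, 1)`, which accounts for the excluded pairs.
-/

open Finset
open scoped Nat

theorem Finset.sum_range_two_mul_add_one {M : Type*} [AddCommMonoid M] (f : ℕ → M) (n : ℕ) :
    ∑ i ∈ range (2 * n + 1), f i =
      ∑ k ∈ range (n + 1), f (2 * k) + ∑ k ∈ range n, f (2 * k + 1) := by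
  induction n with
  | zero => simp
  | succ n ih =>
    rw [show 2 * (n + 1) + 1 = 2 * n + 1 + 1 + 1 by ring, sum_range_succ, sum_range_succ, ih,
      sum_range_succ (fun k => f (2 * k)) (n + 1), sum_range_succ (fun k => f (2 * k + 1)) n,
      show 2 * (n + 1) = 2 * n + 1 + 1 by ring]
    abel

theorem Nat.two_mul_sum_range_choose_two_mul {n : ℕ} (hn : n ≠ 0) :
    2 * ∑ k ∈ range (n + 1), (2 * n).choose (2 * k) = 2 ^ (2 * n) := by
  have heven (k : ℕ) : 1 + (-1 : ℤ) ^ (2 * k) = 2 := by simp [pow_mul]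
  have hodd (k : ℕ) : 1 + (-1 : ℤ) ^ (2 * k + 1) = 0 := by simp [pow_succ, pow_mul]
  have h := sum_range_two_mul_add_one (fun i => (1 + (-1 : ℤ) ^ i) * (2 * n).choose i) n
  simp only [heven, hodd, zero_mul, sum_const_zero, add_zero, ← mul_sum, add_mul, one_mul,
    sum_add_distrib, Int.alternating_sum_range_choose_of_ne (mul_ne_zero two_ne_zero hn)] at h
  have htotal : ∑ i ∈ range (2 * n + 1), ((2 * n).choose i : ℤ) = 2 ^ (2 * n) := by
    exact_mod_cast Nat.sum_range_choose (2 * n)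
  rw [htotal] at h
  exact_mod_cast h.symm

theorem sum_antidiagonal_inv_factorial_two_mul {K : Type*} [Field K] [CharZero K] {n : ℕ}
    (hn : n ≠ 0) :
    ∑ kl ∈ antidiagonal n, (((2 * kl.1)! : K) * (2 * kl.2)!)⁻¹ =
      2 ^ (2 * n) / (2 * (2 * n)!) := by
  have hchoose : ∀ kl ∈ antidiagonal n,
      (((2 * kl.1)! : K) * (2 * kl.2)!)⁻¹ = (2 * n).choose (2 * kl.1) / (2 * n)! := by
    rintro ⟨k, l⟩ hkl
    rw [HasAntidiagonal.mem_antidiagonal] at hkl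
    have h := Nat.add_choose_mul_factorial_mul_factorial (2 * l) (2 * k)
    rw [← mul_add, add_comm l, show k + l = n from hkl] at h
    have hk : ((2 * k)! : K) ≠ 0 := Nat.cast_ne_zero.2 (Nat.factorial_ne_zero _)
    have hl : ((2 * l)! : K) ≠ 0 := Nat.cast_ne_zero.2 (Nat.factorial_ne_zero _)
    rw [eq_div_iff (Nat.cast_ne_zero.2 (Nat.factorial_ne_zero _)), ← h]
    push_cast
    field_simp
  have hsum : ∑ k ∈ range (n + 1), ((2 * n).choose (2 * k) : K) = 2 ^ (2 * n) / 2 := by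
    rw [eq_div_iff two_ne_zero, mul_comm]
    exact_mod_cast Nat.two_mul_sum_range_choose_two_mul hn
  rw [sum_congr rfl hchoose, ← sum_div,
    Nat.sum_antidiagonal_eq_sum_range_succ (fun k _ => ((2 * n).choose (2 * k) : K)), hsum, div_div]

theorem sum_antidiagonal_pow_div_factorial_mul_factorial_div {K : Type*} [Field K] [CharZero K]
    (x : K) {n : ℕ} (hn : n ≠ 0) :
    ∑ kl ∈ antidiagonal n, x ^ (2 * (kl.1 + kl.2)) / (((2 * kl.1)! : K) * (2 * kl.2)!) /
      (2 * ((kl.1 : K) + kl.2) + 1) = (2 * x) ^ (2 * n) / (2 * n + 1)! / 2 := by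
  have hterm : ∀ kl ∈ antidiagonal n,
      x ^ (2 * (kl.1 + kl.2)) / (((2 * kl.1)! : K) * (2 * kl.2)!) / (2 * ((kl.1 : K) + kl.2) + 1) =
        x ^ (2 * n) / (2 * n + 1) * (((2 * kl.1)! : K) * (2 * kl.2)!)⁻¹ := by
    rintro ⟨k, l⟩ hkl
    rw [HasAntidiagonal.mem_antidiagonal] at hkl
    have hkl' : (k : K) + l = n := by exact_mod_cast hkl
    simp only [hkl, hkl']
    ring
  rw [sum_congr rfl hterm, ← mul_sum, sum_antidiagonal_inv_factorial_two_mul hn,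
    Nat.factorial_succ, mul_pow]
  push_cast
  field_simp

theorem HasSum.sum_antidiagonal {α A : Type*} [AddCommMonoid α] [TopologicalSpace α]
    [ContinuousAdd α] [RegularSpace α] [AddMonoid A] [HasAntidiagonal A] {f : A × A → α}
    {a : α} (hf : HasSum f a) : HasSum (fun n => ∑ kl ∈ antidiagonal n, f kl) a :=
  (HasAntidiagonal.sigmaAntidiagonalEquivProd.hasSum_iff.2 hf).sigma fun n => by
    rw [← sum_coe_sort]
    exact hasSum_fintype _

namespace Real

theorem hasSum_sinh_div {x : ℝ} (hx : x ≠ 0) :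
    HasSum (fun k => x ^ (2 * k) / (2 * k + 1)!) (sinh x / x) :=
  ((hasSum_sinh x).div_const x).congr_fun fun k => by
    field_simp
    ring

theorem hasSum_sinh_div_sq {x : ℝ} (hx : x ≠ 0) :
    HasSum (fun p : ℕ × ℕ => x ^ (2 * p.1) / (2 * p.1 + 1)! * (x ^ (2 * p.2) / (2 * p.2 + 1)!))
      ((sinh x / x) ^ 2) := by
  have hcoeff (k : ℕ) : 0 ≤ x ^ (2 * k) / (2 * k + 1)! :=
    div_nonneg ((even_two_mul k).pow_nonneg x) (Nat.cast_nonneg _)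
  have h := hasSum_sinh_div hx
  exact sq (sinh x / x) ▸ h.mul h (h.summable.mul_of_nonneg h.summable hcoeff hcoeff)

theorem hasSum_mean_cosh_sq {x : ℝ} (hx : x ≠ 0) :
    HasSum (fun p : ℕ × ℕ => x ^ (2 * (p.1 + p.2)) / (((2 * p.1)! : ℝ) * (2 * p.2)!) /
      (2 * ((p.1 : ℝ) + p.2) + 1)) ((1 + sinh (2 * x) / (2 * x)) / 2) := by
  have hcoeff (k : ℕ) : 0 ≤ x ^ (2 * k) / (2 * k)! :=
    div_nonneg ((even_two_mul k).pow_nonneg x) (Nat.cast_nonneg _)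
  have hcosh := (hasSum_cosh x).summable
  have hsummable : Summable fun p : ℕ × ℕ => x ^ (2 * (p.1 + p.2)) /
      (((2 * p.1)! : ℝ) * (2 * p.2)!) / (2 * ((p.1 : ℝ) + p.2) + 1) := by
    refine (hcosh.mul_of_nonneg hcosh hcoeff hcoeff).of_nonneg_of_le (fun p => ?_) (fun p => ?_)
      <;> rw [mul_add, pow_add, ← div_mul_div_comm]
    · have := mul_nonneg (hcoeff p.1) (hcoeff p.2)
      positivity
    · exact div_le_self (mul_nonneg (hcoeff p.1) (hcoeff p.2))
        (by linarith [Nat.cast_nonneg (α := ℝ) (p.1 + p.2)])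
  have hdiag : HasSum (fun n => ∑ kl ∈ antidiagonal n, x ^ (2 * (kl.1 + kl.2)) /
      (((2 * kl.1)! : ℝ) * (2 * kl.2)!) / (2 * ((kl.1 : ℝ) + kl.2) + 1))
      ((1 + sinh (2 * x) / (2 * x)) / 2) := by
    rw [add_div, add_comm]
    refine (((hasSum_sinh_div (mul_ne_zero two_ne_zero hx)).div_const 2).add
      (hasSum_ite_eq 0 (1 / 2))).congr_fun fun n => ?_
    rcases eq_or_ne n 0 with rfl | hn
    · norm_num
    · rw [sum_antidiagonal_pow_div_factorial_mul_factorial_div x hn, if_neg hn, add_zero]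
  have h := hsummable.hasSum
  rwa [h.sum_antidiagonal.unique hdiag] at h

end Real

theorem pow_div_factorial_mul_sub_eq (x : ℝ) (k l : ℕ) :
    x ^ (2 * (k + l)) / (((2 * k)! : ℝ) * (2 * l)!) *
        (1 / (2 * ((k : ℝ) + l) + 1) - 1 / ((2 * (k : ℝ) + 1) * (2 * l + 1))) =
      x ^ (2 * (k + l)) / (((2 * k)! : ℝ) * (2 * l)!) / (2 * ((k : ℝ) + l) + 1) -
        x ^ (2 * k) / (2 * k + 1)! * (x ^ (2 * l) / (2 * l + 1)!) := by
  simp only [Nat.factorial_succ]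
  push_cast
  field_simp
  ring

theorem ite_pow_div_factorial_mul_sub_eq (x : ℝ) (p : ℕ × ℕ) :
    (if 1 ≤ p.1 ∧ 1 ≤ p.2 ∧ 3 ≤ p.1 + p.2 then
      x ^ (2 * (p.1 + p.2)) / (((2 * p.1)! : ℝ) * (2 * p.2)!) *
        (1 / (2 * ((p.1 : ℝ) + p.2) + 1) - 1 / ((2 * (p.1 : ℝ) + 1) * (2 * p.2 + 1)))
    else 0) =
      x ^ (2 * (p.1 + p.2)) / (((2 * p.1)! : ℝ) * (2 * p.2)!) *
          (1 / (2 * ((p.1 : ℝ) + p.2) + 1) - 1 / ((2 * (p.1 : ℝ) + 1) * (2 * p.2 + 1))) -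
        if p = (1, 1) then x ^ 4 / 45 else 0 := by
  obtain ⟨k, l⟩ := p
  obtain rfl | rfl | ⟨rfl, rfl⟩ | hkl :
      k = 0 ∨ l = 0 ∨ (k = 1 ∧ l = 1) ∨ (1 ≤ k ∧ 1 ≤ l ∧ 3 ≤ k + l) := by omega
  · simp
  · simp
  · norm_num [Nat.factorial]
    ring
  · rw [if_pos hkl, if_neg fun h => by simp only [Prod.mk.injEq] at h; omega, sub_zero]

/-- For every real `x > 0`, the double series over pairs of positive
integers `(k, k')` with `k + k' ≥ 3` of the terms
`x^(2(k+k')) / ((2k)!·(2k')!) · (1/(2(k+k')+1) − 1/((2k+1)(2k'+1)))`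
is summable, and its (unordered) sum equals
`(1/2)·(1 + sinh(2x)/(2x) − 2·(sinh x / x)² − 2x⁴/45)`. -/
theorem stmt0 (x : ℝ) (hx : 0 < x) :
    Summable (fun p : ℕ × ℕ =>
      if 1 ≤ p.1 ∧ 1 ≤ p.2 ∧ 3 ≤ p.1 + p.2 then
        x ^ (2 * (p.1 + p.2)) / (((2 * p.1).factorial : ℝ) * ((2 * p.2).factorial : ℝ)) *
          (1 / (2 * ((p.1 : ℝ) + (p.2 : ℝ)) + 1) -
            1 / ((2 * (p.1 : ℝ) + 1) * (2 * (p.2 : ℝ) + 1)))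
      else 0) ∧
    (∑' p : ℕ × ℕ,
      if 1 ≤ p.1 ∧ 1 ≤ p.2 ∧ 3 ≤ p.1 + p.2 then
        x ^ (2 * (p.1 + p.2)) / (((2 * p.1).factorial : ℝ) * ((2 * p.2).factorial : ℝ)) *
          (1 / (2 * ((p.1 : ℝ) + (p.2 : ℝ)) + 1) -
            1 / ((2 * (p.1 : ℝ) + 1) * (2 * (p.2 : ℝ) + 1)))
      else 0) =
      (1 / 2) * (1 + Real.sinh (2 * x) / (2 * x) - 2 * (Real.sinh x / x) ^ 2
        - 2 * x ^ 4 / 45) := by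
  have hall := ((Real.hasSum_mean_cosh_sq hx.ne').sub (Real.hasSum_sinh_div_sq hx.ne')).congr_fun
    fun p => pow_div_factorial_mul_sub_eq x p.1 p.2
  have h := (hall.sub (hasSum_ite_eq ((1, 1) : ℕ × ℕ) (x ^ 4 / 45))).congr_fun
    (ite_pow_div_factorial_mul_sub_eq x)
  exact ⟨h.summable, by rw [h.tsum_eq]; ring⟩
end

section
/- Define S(x) = (1/2)·( 1 + sinh(2x)/(2x) − 2·(sinh(x)/x)² − 2x⁴/45 ) for x > 0. Then for every real x with 0 < x ≤ 3/2 one has S(x) ≤ x⁶/270. -/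
set_option maxHeartbeats 1000000

private lemma lemR (x : ℝ) (h0 : 0 ≤ x) (h1 : x ≤ 3/2) :
    0 ≤ (2/945:ℝ) + 4/945*x + 16/4725*x^2 + 16/14175*x^3 - (148/467775)*x^4 - (296/467775)*x^5 - (1472/3274425)*x^6 - (1544/7016625)*x^7 - (1432/16372125)*x^8 - (4282/147349125)*x^9 - (736/88409475)*x^10 - (976/442047375)*x^11 - (152/315748125)*x^12 - (752/6630710625)*x^13 - (464/24312605625)*x^14 - (208/72937816875)*x^15 - (16/43762690125)*x^16 - (8/218813450625)*x^17 := by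
  rcases le_total x (11/10) with hA | hB
  · -- x ≤ 11/10: bound all negative monomials by x^2 terms
    have hk4 : x^4 ≤ 121/100*x^2 := by
      have h := mul_le_mul_of_nonneg_right (pow_le_pow_left₀ h0 hA 2) (sq_nonneg x)
      calc x^4 = x^2*x^2 := by ring
        _ ≤ (11/10:ℝ)^2*x^2 := h
        _ = 121/100*x^2 := by norm_num
    have hk5 : x^5 ≤ 1331/1000*x^2 := by
      have h := mul_le_mul_of_nonneg_right (pow_le_pow_left₀ h0 hA 3) (sq_nonneg x)
      calc x^5 = x^3*x^2 := by ring
        _ ≤ (11/10:ℝ)^3*x^2 := h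
        _ = 1331/1000*x^2 := by norm_num
    have hk6 : x^6 ≤ 14641/10000*x^2 := by
      have h := mul_le_mul_of_nonneg_right (pow_le_pow_left₀ h0 hA 4) (sq_nonneg x)
      calc x^6 = x^4*x^2 := by ring
        _ ≤ (11/10:ℝ)^4*x^2 := h
        _ = 14641/10000*x^2 := by norm_num
    have hk7 : x^7 ≤ 161051/100000*x^2 := by
      have h := mul_le_mul_of_nonneg_right (pow_le_pow_left₀ h0 hA 5) (sq_nonneg x)
      calc x^7 = x^5*x^2 := by ring
        _ ≤ (11/10:ℝ)^5*x^2 := h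
        _ = 161051/100000*x^2 := by norm_num
    have hk8 : x^8 ≤ 1771561/1000000*x^2 := by
      have h := mul_le_mul_of_nonneg_right (pow_le_pow_left₀ h0 hA 6) (sq_nonneg x)
      calc x^8 = x^6*x^2 := by ring
        _ ≤ (11/10:ℝ)^6*x^2 := h
        _ = 1771561/1000000*x^2 := by norm_num
    have hk9 : x^9 ≤ 19487171/10000000*x^2 := by
      have h := mul_le_mul_of_nonneg_right (pow_le_pow_left₀ h0 hA 7) (sq_nonneg x)
      calc x^9 = x^7*x^2 := by ring
        _ ≤ (11/10:ℝ)^7*x^2 := h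
        _ = 19487171/10000000*x^2 := by norm_num
    have hk10 : x^10 ≤ 214358881/100000000*x^2 := by
      have h := mul_le_mul_of_nonneg_right (pow_le_pow_left₀ h0 hA 8) (sq_nonneg x)
      calc x^10 = x^8*x^2 := by ring
        _ ≤ (11/10:ℝ)^8*x^2 := h
        _ = 214358881/100000000*x^2 := by norm_num
    have hk11 : x^11 ≤ 2357947691/1000000000*x^2 := by
      have h := mul_le_mul_of_nonneg_right (pow_le_pow_left₀ h0 hA 9) (sq_nonneg x)
      calc x^11 = x^9*x^2 := by ring
        _ ≤ (11/10:ℝ)^9*x^2 := h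
        _ = 2357947691/1000000000*x^2 := by norm_num
    have hk12 : x^12 ≤ 25937424601/10000000000*x^2 := by
      have h := mul_le_mul_of_nonneg_right (pow_le_pow_left₀ h0 hA 10) (sq_nonneg x)
      calc x^12 = x^10*x^2 := by ring
        _ ≤ (11/10:ℝ)^10*x^2 := h
        _ = 25937424601/10000000000*x^2 := by norm_num
    have hk13 : x^13 ≤ 285311670611/100000000000*x^2 := by
      have h := mul_le_mul_of_nonneg_right (pow_le_pow_left₀ h0 hA 11) (sq_nonneg x)
      calc x^13 = x^11*x^2 := by ring
        _ ≤ (11/10:ℝ)^11*x^2 := h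
        _ = 285311670611/100000000000*x^2 := by norm_num
    have hk14 : x^14 ≤ 3138428376721/1000000000000*x^2 := by
      have h := mul_le_mul_of_nonneg_right (pow_le_pow_left₀ h0 hA 12) (sq_nonneg x)
      calc x^14 = x^12*x^2 := by ring
        _ ≤ (11/10:ℝ)^12*x^2 := h
        _ = 3138428376721/1000000000000*x^2 := by norm_num
    have hk15 : x^15 ≤ 34522712143931/10000000000000*x^2 := by
      have h := mul_le_mul_of_nonneg_right (pow_le_pow_left₀ h0 hA 13) (sq_nonneg x)
      calc x^15 = x^13*x^2 := by ring
        _ ≤ (11/10:ℝ)^13*x^2 := h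
        _ = 34522712143931/10000000000000*x^2 := by norm_num
    have hk16 : x^16 ≤ 379749833583241/100000000000000*x^2 := by
      have h := mul_le_mul_of_nonneg_right (pow_le_pow_left₀ h0 hA 14) (sq_nonneg x)
      calc x^16 = x^14*x^2 := by ring
        _ ≤ (11/10:ℝ)^14*x^2 := h
        _ = 379749833583241/100000000000000*x^2 := by norm_num
    have hk17 : x^17 ≤ 4177248169415651/1000000000000000*x^2 := by
      have h := mul_le_mul_of_nonneg_right (pow_le_pow_left₀ h0 hA 15) (sq_nonneg x)
      calc x^17 = x^15*x^2 := by ring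
        _ ≤ (11/10:ℝ)^15*x^2 := h
        _ = 4177248169415651/1000000000000000*x^2 := by norm_num
    linarith [hk4, hk5, hk6, hk7, hk8, hk9, hk10, hk11, hk12, hk13, hk14, hk15, hk16, hk17, sq_nonneg x, pow_nonneg h0 3, mul_nonneg h0 (sq_nonneg x)]
  · -- 11/10 ≤ x ≤ 3/2: expand around 3/2
    have hy0 : (0:ℝ) ≤ 3/2 - x := by linarith
    have hy : (3:ℝ)/2 - x ≤ 2/5 := by linarith
    have p1 : (0:ℝ) ≤ (3/2 - x)*(49442780843/819624960000 - 546391829/3659040000*(3/2 - x)) := mul_nonneg hy0 (by linarith)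
    have p3 : (0:ℝ) ≤ (3/2 - x)^3*(86565739/474320000 - 4879011791/32931360000*(3/2 - x)) := mul_nonneg (pow_nonneg hy0 3) (by linarith)
    have p5 : (0:ℝ) ≤ (3/2 - x)^5*(10382466359/115259760000 - 314967133/7203735000*(3/2 - x)) := mul_nonneg (pow_nonneg hy0 5) (by linarith)
    have p7 : (0:ℝ) ≤ (3/2 - x)^7*(2468017/140332500 - 15685969/2619540000*(3/2 - x)) := mul_nonneg (pow_nonneg hy0 7) (by linarith)
    have p9 : (0:ℝ) ≤ (3/2 - x)^9*(20535439/11787930000 - 27341/63149625*(3/2 - x)) := mul_nonneg (pow_nonneg hy0 9) (by linarith)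
    have p11 : (0:ℝ) ≤ (3/2 - x)^11*(88702/972504225 - 26041/1620840375*(3/2 - x)) := mul_nonneg (pow_nonneg hy0 11) (by linarith)
    have p13 : (0:ℝ) ≤ (3/2 - x)^13*(169174/72937816875 - 6464/24312605625*(3/2 - x)) := mul_nonneg (pow_nonneg hy0 13) (by linarith)
    have p15 : (0:ℝ) ≤ (3/2 - x)^15*(1664/72937816875 - 284/218813450625*(3/2 - x)) := mul_nonneg (pow_nonneg hy0 15) (by linarith)
    have p17 : (0:ℝ) ≤ (3/2 - x)^17*(8/218813450625 + 0*(3/2 - x)) := mul_nonneg (pow_nonneg hy0 17) (by linarith)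
    nlinarith [p1, p3, p5, p7, p9, p11, p13, p15, p17]

private lemma lemD (x : ℝ) (h0 : 0 ≤ x) (h1 : x ≤ 3/2) :
    0 ≤ (3/2:ℝ) + 1/3*x^2 - (1/15)*x^4 - (2/105)*x^6 + 1/945*x^7 - (1/567)*x^8 - (2/4725)*x^9 - (2/22275)*x^10 - (8/467775)*x^11 - (2/467775)*x^12 := by
  have hd4 : x^4 ≤ 81/16 := by
    calc x^4 ≤ (3/2:ℝ)^4 := pow_le_pow_left₀ h0 h1 4
      _ = 81/16 := by norm_num
  have hd6 : x^6 ≤ 729/64 := by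
    calc x^6 ≤ (3/2:ℝ)^6 := pow_le_pow_left₀ h0 h1 6
      _ = 729/64 := by norm_num
  have hd8 : x^8 ≤ 6561/256 := by
    calc x^8 ≤ (3/2:ℝ)^8 := pow_le_pow_left₀ h0 h1 8
      _ = 6561/256 := by norm_num
  have hd9 : x^9 ≤ 19683/512 := by
    calc x^9 ≤ (3/2:ℝ)^9 := pow_le_pow_left₀ h0 h1 9
      _ = 19683/512 := by norm_num
  have hd10 : x^10 ≤ 59049/1024 := by
    calc x^10 ≤ (3/2:ℝ)^10 := pow_le_pow_left₀ h0 h1 10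
      _ = 59049/1024 := by norm_num
  have hd11 : x^11 ≤ 177147/2048 := by
    calc x^11 ≤ (3/2:ℝ)^11 := pow_le_pow_left₀ h0 h1 11
      _ = 177147/2048 := by norm_num
  have hd12 : x^12 ≤ 531441/4096 := by
    calc x^12 ≤ (3/2:ℝ)^12 := pow_le_pow_left₀ h0 h1 12
      _ = 531441/4096 := by norm_num
  linarith [hd4, hd6, hd8, hd9, hd10, hd11, hd12, sq_nonneg x, pow_nonneg h0 7]

/-- With `S(x) = (1/2)·(1 + sinh(2x)/(2x) − 2·(sinh x / x)² − 2x⁴/45)`,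
for every real `x` with `0 < x ≤ 3/2` one has `S(x) ≤ x⁶/270`. -/
theorem stmt1 (x : ℝ) (hx0 : 0 < x) (hx : x ≤ 3 / 2) :
    (1 / 2) * (1 + Real.sinh (2 * x) / (2 * x) - 2 * (Real.sinh x / x) ^ 2
        - 2 * x ^ 4 / 45) ≤ x ^ 6 / 270 := by
  have hu : 0 < Real.exp x := Real.exp_pos x
  have hw : Real.exp (2*x) = Real.exp x * Real.exp x := by rw [two_mul, Real.exp_add]
  set u := Real.exp x with hudef
  have hsum : ∑ i ∈ Finset.range 13, (2*x) ^ i / (Nat.factorial i) = (1:ℝ) + 2*x + 2*x^2 + 4/3*x^3 + 2/3*x^4 + 4/15*x^5 + 4/45*x^6 + 8/315*x^7 + 2/315*x^8 + 4/2835*x^9 + 4/14175*x^10 + 8/155925*x^11 + 4/467775*x^12 := by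
    simp [Finset.sum_range_succ, Nat.factorial]
    ring
  have hL : (1:ℝ) + 2*x + 2*x^2 + 4/3*x^3 + 2/3*x^4 + 4/15*x^5 + 4/45*x^6 + 8/315*x^7 + 2/315*x^8 + 4/2835*x^9 + 4/14175*x^10 + 8/155925*x^11 + 4/467775*x^12 ≤ u * u := by
    have h := Real.sum_le_exp_of_nonneg (by linarith : (0:ℝ) ≤ 2*x) 13
    rw [hsum, hw] at h
    exact h
  have e1 : Real.sinh (2*x) = (u*u - (u*u)⁻¹)/2 := by
    rw [Real.sinh_eq, Real.exp_neg, hw]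
  have e2 : Real.sinh x = (u - u⁻¹)/2 := by rw [Real.sinh_eq, Real.exp_neg]
  rw [← sub_nonneg, e1, e2]
  have key : x ^ 6 / 270 - 1 / 2 * (1 + (u*u - (u*u)⁻¹)/2/(2*x) - 2*((u - u⁻¹)/2/x)^2 - 2*x^4/45)
      = ((1 - x/2)*(u*u)^2 - 2*((1:ℝ) + 1*x^2 - (2/45)*x^6 - (1/135)*x^8)*(u*u) + (1 + x/2)) / (4*x^2*(u*u)) := by
    have hxne : x ≠ 0 := ne_of_gt hx0
    have hune : u ≠ 0 := ne_of_gt hu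
    field_simp
    ring
  rw [key]
  apply div_nonneg _ (by positivity)
  have hR := lemR x hx0.le hx
  have hD := lemD x hx0.le hx
  have h1 : 0 ≤ x^8 * ((2/945:ℝ) + 4/945*x + 16/4725*x^2 + 16/14175*x^3 - (148/467775)*x^4 - (296/467775)*x^5 - (1472/3274425)*x^6 - (1544/7016625)*x^7 - (1432/16372125)*x^8 - (4282/147349125)*x^9 - (736/88409475)*x^10 - (976/442047375)*x^11 - (152/315748125)*x^12 - (752/6630710625)*x^13 - (464/24312605625)*x^14 - (208/72937816875)*x^15 - (16/43762690125)*x^16 - (8/218813450625)*x^17) := mul_nonneg (pow_nonneg hx0.le 8) hR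
  have h2 : 0 ≤ (2*x*((3/2:ℝ) + 1/3*x^2 - (1/15)*x^4 - (2/105)*x^6 + 1/945*x^7 - (1/567)*x^8 - (2/4725)*x^9 - (2/22275)*x^10 - (8/467775)*x^11 - (2/467775)*x^12)) * (u*u - ((1:ℝ) + 2*x + 2*x^2 + 4/3*x^3 + 2/3*x^4 + 4/15*x^5 + 4/45*x^6 + 8/315*x^7 + 2/315*x^8 + 4/2835*x^9 + 4/14175*x^10 + 8/155925*x^11 + 4/467775*x^12)) := by
    apply mul_nonneg
    · apply mul_nonneg (by linarith) hD
    · linarith [hL]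
  have h3 : 0 ≤ (1 - x/2) * (u*u - ((1:ℝ) + 2*x + 2*x^2 + 4/3*x^3 + 2/3*x^4 + 4/15*x^5 + 4/45*x^6 + 8/315*x^7 + 2/315*x^8 + 4/2835*x^9 + 4/14175*x^10 + 8/155925*x^11 + 4/467775*x^12))^2 := mul_nonneg (by linarith) (sq_nonneg _)
  have hiden : (1 - x/2)*(u*u)^2 - 2*((1:ℝ) + 1*x^2 - (2/45)*x^6 - (1/135)*x^8)*(u*u) + (1 + x/2)
      = x^8 * ((2/945:ℝ) + 4/945*x + 16/4725*x^2 + 16/14175*x^3 - (148/467775)*x^4 - (296/467775)*x^5 - (1472/3274425)*x^6 - (1544/7016625)*x^7 - (1432/16372125)*x^8 - (4282/147349125)*x^9 - (736/88409475)*x^10 - (976/442047375)*x^11 - (152/315748125)*x^12 - (752/6630710625)*x^13 - (464/24312605625)*x^14 - (208/72937816875)*x^15 - (16/43762690125)*x^16 - (8/218813450625)*x^17) + (2*x*((3/2:ℝ) + 1/3*x^2 - (1/15)*x^4 - (2/105)*x^6 + 1/945*x^7 - (1/567)*x^8 - (2/4725)*x^9 - (2/22275)*x^10 - (8/467775)*x^11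 - (2/467775)*x^12)) * (u*u - ((1:ℝ) + 2*x + 2*x^2 + 4/3*x^3 + 2/3*x^4 + 4/15*x^5 + 4/45*x^6 + 8/315*x^7 + 2/315*x^8 + 4/2835*x^9 + 4/14175*x^10 + 8/155925*x^11 + 4/467775*x^12)) + (1 - x/2) * (u*u - ((1:ℝ) + 2*x + 2*x^2 + 4/3*x^3 + 2/3*x^4 + 4/15*x^5 + 4/45*x^6 + 8/315*x^7 + 2/315*x^8 + 4/2835*x^9 + 4/14175*x^10 + 8/155925*x^11 + 4/467775*x^12))^2 := by
    ring
  rw [hiden]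
  linarith [h1, h2, h3]
end

section
/- Let α, γ > 0 and let f : ℝ → ℝ be the sum of a power series centered at 0 with infinite radius of convergence (i.e., f(x) = Σ_{k=0}^∞ a_k x^k for all real x), and suppose that the even derivatives at 0 satisfy |f^(2p)(0)| ≤ α·γ^(2p) for every integer p ≥ 1. Then for every r with 0 < r and 2γr ≤ 3, the variance of f under the uniform distribution on [−r, r] satisfies Var[f] := (1/(2r))∫_{−r}^{r} f(θ)² dθ − ( (1/(2r))∫_{−r}^{r} f(θ) dθ )² ≥ (r⁴/45)·(f''(0))² − (α²γ⁶/270)·r⁶. -/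
/-!
Let `P₂(θ) = θ² - r²/3`, which is orthogonal to constants on `[-r, r]` and has
`∫ P₂² = 8r⁵/45`. For the mean `m` of `f` and any `c`, expanding `0 ≤ ∫ (f - m - c P₂)²` gives
`2r · Var f ≥ 2c ∫ f P₂ - c² · 8r⁵/45`. Integrating the power series termwise against `P₂`, the odd
moments and the constant moment vanish and the quadratic one is `8r⁵/45`, so
`∫ f P₂ = (8r⁵/45) a₂ + T`, where `T` collects the even terms of degree at least `4`. Taking
`c = a₂ = f''(0)/2` leaves `Var f ≥ (r⁴/45) f''(0)² + a₂ T / r`. The derivative bounds together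
with `(2j)! ≥ 24 · 25^(j-2)` and `(γr)² ≤ 9/4` dominate `T` by a geometric series with ratio
`9/100`, giving `|T| ≤ αγ⁴r⁷/135`, and `|a₂| ≤ αγ²/2` finishes.
-/

open intervalIntegral
open scoped Nat

section PowerSeries

variable {f : ℝ → ℝ} {a : ℕ → ℝ}

theorem hasFPowerSeriesOnBall_ofScalars_of_forall_hasSum
    (hf : ∀ x, HasSum (fun k => a k * x ^ k) (f x)) :
    HasFPowerSeriesOnBall f (FormalMultilinearSeries.ofScalars ℝ a) 0 ⊤ where
  r_le := by
    refine le_of_eq (ENNReal.eq_top_of_forall_nnreal_le fun R => ?_).symm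
    refine FormalMultilinearSeries.le_radius_of_tendsto _ (l := 0) ?_
    simpa [FormalMultilinearSeries.ofScalars_norm, norm_mul, norm_pow]
      using (hf R).summable.tendsto_atTop_zero.norm
  r_pos := ENNReal.zero_lt_top
  hasSum {y} _ := by
    simpa [FormalMultilinearSeries.ofScalars_apply_eq, mul_comm] using hf y

theorem iteratedDeriv_zero_eq_of_forall_hasSum
    (hf : ∀ x, HasSum (fun k => a k * x ^ k) (f x)) (n : ℕ) :
    iteratedDeriv n f 0 = n ! * a n := by
  rw [iteratedDeriv_eq_iteratedFDeriv,
    ← (hasFPowerSeriesOnBall_ofScalars_of_forall_hasSum hf).factorial_smul 1 n]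
  simp [mul_comm]

theorem continuous_of_forall_hasSum (hf : ∀ x, HasSum (fun k => a k * x ^ k) (f x)) :
    Continuous f := by
  simpa [continuousOn_univ] using
    (hasFPowerSeriesOnBall_ofScalars_of_forall_hasSum hf).continuousOn

theorem summable_abs_mul_pow_of_forall_hasSum
    (hf : ∀ x, HasSum (fun k => a k * x ^ k) (f x)) {R : ℝ} (hR : 0 ≤ R) :
    Summable fun k => |a k| * R ^ k := by
  have := (FormalMultilinearSeries.ofScalars ℝ a).summable_norm_mul_pow (r := ⟨R, hR⟩)
    (ENNReal.coe_lt_top.trans_le (hasFPowerSeriesOnBall_ofScalars_of_forall_hasSum hf).r_le)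
  simp only [FormalMultilinearSeries.ofScalars_norm, Real.norm_eq_abs] at this
  exact this

theorem hasSum_intervalIntegral_mul_of_forall_hasSum
    (hf : ∀ x, HasSum (fun k => a k * x ^ k) (f x)) {g : ℝ → ℝ} (hg : Continuous g) (u v : ℝ) :
    HasSum (fun k => a k * ∫ θ in u..v, θ ^ k * g θ) (∫ θ in u..v, f θ * g θ) := by
  set R := max |u| |v|
  have hR : 0 ≤ R := le_max_of_le_left (abs_nonneg u)
  obtain ⟨B, hB⟩ := (isCompact_uIcc (a := u) (b := v)).exists_bound_of_continuousOn hg.continuousOn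
  have hsum := (summable_abs_mul_pow_of_forall_hasSum hf hR).mul_right B
  have key := hasSum_integral_of_dominated_convergence
    (μ := MeasureTheory.volume) (F := fun k θ => a k * θ ^ k * g θ) (fun k _ => |a k| * R ^ k * B)
    (fun k => (by fun_prop : Continuous fun θ => a k * θ ^ k * g θ).aestronglyMeasurable)
    (fun k => .of_forall fun θ hθ => by
      have hθ' := Set.uIoc_subset_uIcc hθ
      have hθR : |θ| ≤ R := by
        rcases Set.mem_uIcc.1 hθ' with h | h
        exacts [abs_le_max_abs_abs h.1 h.2, (abs_le_max_abs_abs h.1 h.2).trans_eq (max_comm _ _)]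
      rw [norm_mul, norm_mul, norm_pow, Real.norm_eq_abs, Real.norm_eq_abs]
      gcongr
      exact hB θ hθ')
    (.of_forall fun _ _ => hsum) intervalIntegrable_const
    (.of_forall fun θ _ => (hf θ).mul_right (g θ))
  simpa only [mul_assoc, integral_const_mul] using key

end PowerSeries

/-- Up to the factor `3 / (2 r²)`, the Legendre polynomial `P₂` transported to `[-r, r]`. -/
noncomputable def legendreP2 (r θ : ℝ) : ℝ := θ ^ 2 - r ^ 2 / 3

section LegendreMoments

variable (r : ℝ)

@[fun_prop]
theorem continuous_legendreP2 : Continuous (legendreP2 r) := by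
  unfold legendreP2; fun_prop

theorem integral_pow_mul_legendreP2 (k : ℕ) :
    ∫ θ in (-r)..r, θ ^ k * legendreP2 r θ =
      (r ^ (k + 3) - (-r) ^ (k + 3)) / (k + 3)
        - r ^ 2 / 3 * ((r ^ (k + 1) - (-r) ^ (k + 1)) / (k + 1)) := by
  simp only [legendreP2, mul_sub, ← pow_add, mul_comm _ (r ^ 2 / 3)]
  rw [integral_sub ((continuous_pow _).intervalIntegrable _ _)
      ((continuous_const.fun_mul (continuous_pow _)).intervalIntegrable _ _),
    integral_const_mul, integral_pow, integral_pow]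
  push_cast
  ring

theorem integral_pow_mul_legendreP2_of_odd {k : ℕ} (hk : Odd k) :
    ∫ θ in (-r)..r, θ ^ k * legendreP2 r θ = 0 := by
  rw [integral_pow_mul_legendreP2, (hk.add_odd (by decide : Odd 3)).neg_pow,
    (hk.add_odd odd_one).neg_pow]
  simp

theorem integral_pow_two_mul_mul_legendreP2 (j : ℕ) :
    ∫ θ in (-r)..r, θ ^ (2 * j) * legendreP2 r θ =
      8 * j * r ^ (2 * j + 3) / (3 * (2 * j + 1) * (2 * j + 3)) := by
  have h3 : (-r) ^ (2 * j + 3) = -r ^ (2 * j + 3) := Odd.neg_pow ⟨j + 1, by ring⟩ r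
  have h1 : (-r) ^ (2 * j + 1) = -r ^ (2 * j + 1) := Odd.neg_pow ⟨j, rfl⟩ r
  rw [integral_pow_mul_legendreP2, h3, h1]
  push_cast
  field_simp
  ring

theorem integral_legendreP2 : ∫ θ in (-r)..r, legendreP2 r θ = 0 := by
  simpa using integral_pow_two_mul_mul_legendreP2 r 0

theorem integral_legendreP2_sq : ∫ θ in (-r)..r, legendreP2 r θ ^ 2 = 8 * r ^ 5 / 45 := by
  have h : ∀ θ, legendreP2 r θ ^ 2 = θ ^ (2 * 1) * legendreP2 r θ - r ^ 2 / 3 * legendreP2 r θ :=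
    fun θ => by simp only [legendreP2]; ring
  simp_rw [h]
  rw [integral_sub (((continuous_pow _).fun_mul (continuous_legendreP2 r)).intervalIntegrable _ _)
      ((continuous_const.fun_mul (continuous_legendreP2 r)).intervalIntegrable _ _),
    integral_const_mul, integral_pow_two_mul_mul_legendreP2, integral_legendreP2]
  norm_num

theorem integral_pow_two_mul_mul_legendreP2_le {j : ℕ} (hj : 2 ≤ j) (hr : 0 ≤ r) :
    ∫ θ in (-r)..r, θ ^ (2 * j) * legendreP2 r θ ≤ 16 / 105 * r ^ (2 * j + 3) := by
  rw [integral_pow_two_mul_mul_legendreP2, div_le_iff₀ (by positivity)]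
  have hj' : (2 : ℝ) ≤ j := by exact_mod_cast hj
  have : 0 ≤ r ^ (2 * j + 3) * ((j - 2) * (8 * j - 3)) :=
    mul_nonneg (by positivity) (mul_nonneg (by linarith) (by linarith))
  nlinarith

end LegendreMoments

theorem le_variance_of_legendreP2 {f : ℝ → ℝ} (hf : Continuous f) {r : ℝ} (hr : 0 < r) (c : ℝ) :
    (2 * c * (∫ θ in (-r)..r, f θ * legendreP2 r θ) - c ^ 2 * (8 * r ^ 5 / 45)) / (2 * r) ≤
      (1 / (2 * r)) * (∫ θ in (-r)..r, f θ ^ 2) - ((1 / (2 * r)) * ∫ θ in (-r)..r, f θ) ^ 2 := by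
  set m := (1 / (2 * r)) * ∫ θ in (-r)..r, f θ with hm
  have hsq : 0 ≤ ∫ θ in (-r)..r, (f θ - m - c * legendreP2 r θ) ^ 2 :=
    integral_nonneg (by linarith) fun _ _ => sq_nonneg _
  have hexpand : ∀ θ, (f θ - m - c * legendreP2 r θ) ^ 2 = f θ ^ 2 - 2 * m * f θ
      - 2 * c * (f θ * legendreP2 r θ) + m ^ 2 + 2 * m * c * legendreP2 r θ
      + c ^ 2 * legendreP2 r θ ^ 2 := fun θ => by ring
  simp_rw [hexpand] at hsq
  simp (disch := apply Continuous.intervalIntegrable; fun_prop) only [integral_add, integral_sub,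
    integral_const_mul, integral_const, integral_legendreP2, integral_legendreP2_sq] at hsq
  have hmean : ∫ θ in (-r)..r, f θ = 2 * r * m := by rw [hm]; field_simp
  rw [hmean, smul_eq_mul] at hsq
  rw [div_le_iff₀ (by positivity)]
  field_simp
  linarith

section Tail

variable {f : ℝ → ℝ} {a : ℕ → ℝ}

theorem hasSum_integral_mul_legendreP2_tail (hf : ∀ x, HasSum (fun k => a k * x ^ k) (f x))
    (r : ℝ) :
    HasSum (fun s => a (2 * (s + 2)) * ∫ θ in (-r)..r, θ ^ (2 * (s + 2)) * legendreP2 r θ)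
      ((∫ θ in (-r)..r, f θ * legendreP2 r θ) - 8 * r ^ 5 / 45 * a 2) := by
  have hall := hasSum_intervalIntegral_mul_of_forall_hasSum hf (continuous_legendreP2 r) (-r) r
  have heven : HasSum (fun j => a (2 * j) * ∫ θ in (-r)..r, θ ^ (2 * j) * legendreP2 r θ)
      (∫ θ in (-r)..r, f θ * legendreP2 r θ) := by
    have hinj : Function.Injective fun j : ℕ => 2 * j := mul_right_injective₀ two_ne_zero
    refine (hinj.hasSum_iff fun k hk => ?_).2 hall
    have hodd : Odd k := Nat.not_even_iff_odd.1 fun ⟨j, hj⟩ => hk ⟨j, show 2 * j = k by omega⟩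
    rw [integral_pow_mul_legendreP2_of_odd r hodd, mul_zero]
  have hhead : ∑ j ∈ Finset.range 2, a (2 * j) * ∫ θ in (-r)..r, θ ^ (2 * j) * legendreP2 r θ =
      8 * r ^ 5 / 45 * a 2 := by
    simp only [Finset.sum_range_succ, Finset.sum_range_zero, integral_pow_two_mul_mul_legendreP2]
    norm_num
    ring
  simpa only [hhead] using (hasSum_nat_add_iff' 2).2 heven

end Tail

section TailBound

variable {a : ℕ → ℝ} {α γ r : ℝ}

theorem abs_mul_integral_pow_mul_legendreP2_le (hα : 0 ≤ α) (hγ : 0 ≤ γ) (hr : 0 ≤ r)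
    (hγr : 2 * γ * r ≤ 3) (ha : ∀ j, 2 ≤ j → |a (2 * j)| ≤ α * γ ^ (2 * j) / (2 * j)!) (s : ℕ) :
    |a (2 * (s + 2)) * ∫ θ in (-r)..r, θ ^ (2 * (s + 2)) * legendreP2 r θ| ≤
      2 / 315 * α * γ ^ 4 * r ^ 7 * (9 / 100) ^ s := by
  have hM0 : 0 ≤ ∫ θ in (-r)..r, θ ^ (2 * (s + 2)) * legendreP2 r θ := by
    rw [integral_pow_two_mul_mul_legendreP2]; positivity
  have hfac : (24 * 25 ^ s : ℝ) ≤ (2 * (s + 2))! := by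
    have h := Nat.factorial_mul_pow_le_factorial (m := 4) (n := 2 * s)
    rw [show 4 + 2 * s = 2 * (s + 2) by ring, pow_mul] at h
    exact_mod_cast h
  have hγr' : (γ * r) ^ 2 / 25 ≤ 9 / 100 := by nlinarith [mul_nonneg hγ hr]
  calc |a (2 * (s + 2)) * ∫ θ in (-r)..r, θ ^ (2 * (s + 2)) * legendreP2 r θ|
      = |a (2 * (s + 2))| * ∫ θ in (-r)..r, θ ^ (2 * (s + 2)) * legendreP2 r θ := by
        rw [abs_mul, abs_of_nonneg hM0]
    _ ≤ α * γ ^ (2 * (s + 2)) / (24 * 25 ^ s) * (16 / 105 * r ^ (2 * (s + 2) + 3)) := by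
        gcongr
        · exact (ha _ (by omega)).trans (by gcongr)
        · exact integral_pow_two_mul_mul_legendreP2_le r (by omega) hr
    _ = 2 / 315 * α * γ ^ 4 * r ^ 7 * ((γ * r) ^ 2 / 25) ^ s := by rw [div_pow]; field_simp; ring
    _ ≤ 2 / 315 * α * γ ^ 4 * r ^ 7 * (9 / 100) ^ s := by gcongr

theorem abs_le_of_hasSum_integral_mul_legendreP2_tail (hα : 0 ≤ α) (hγ : 0 ≤ γ) (hr : 0 ≤ r)
    (hγr : 2 * γ * r ≤ 3) (ha : ∀ j, 2 ≤ j → |a (2 * j)| ≤ α * γ ^ (2 * j) / (2 * j)!) {T : ℝ}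
    (hT : HasSum
      (fun s => a (2 * (s + 2)) * ∫ θ in (-r)..r, θ ^ (2 * (s + 2)) * legendreP2 r θ) T) :
    |T| ≤ α * γ ^ 4 * r ^ 7 / 135 := by
  have hgeom := (hasSum_geometric_of_lt_one (r := (9 / 100 : ℝ)) (by norm_num)
    (by norm_num)).mul_left (2 / 315 * α * γ ^ 4 * r ^ 7)
  calc |T| ≤ 2 / 315 * α * γ ^ 4 * r ^ 7 * (1 - 9 / 100)⁻¹ :=
        hT.norm_le_of_bounded hgeom (abs_mul_integral_pow_mul_legendreP2_le hα hγ hr hγr ha)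
    _ ≤ α * γ ^ 4 * r ^ 7 / 135 := by
        have : 0 ≤ α * γ ^ 4 * r ^ 7 := by positivity
        norm_num
        nlinarith

end TailBound

theorem stmt3_general (α γ : ℝ) (hγ : 0 < γ)
    (f : ℝ → ℝ) (a : ℕ → ℝ)
    (hf : ∀ x : ℝ, HasSum (fun k : ℕ => a k * x ^ k) (f x))
    (hderiv : ∀ p : ℕ, 1 ≤ p → |iteratedDeriv (2 * p) f 0| ≤ α * γ ^ (2 * p))
    (r : ℝ) (hr : 0 < r) (hrγ : 2 * γ * r ≤ 3) :
    (1 / (2 * r)) * (∫ θ in (-r)..r, (f θ) ^ 2)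
        - ((1 / (2 * r)) * ∫ θ in (-r)..r, f θ) ^ 2 ≥
      (r ^ 4 / 45) * (iteratedDeriv 2 f 0) ^ 2 - (α ^ 2 * γ ^ 6 / 270) * r ^ 6 := by
  have hcoeff := iteratedDeriv_zero_eq_of_forall_hasSum hf
  have ha : ∀ j, 1 ≤ j → |a (2 * j)| ≤ α * γ ^ (2 * j) / (2 * j)! := fun j hj => by
    have h := hderiv j hj
    rw [hcoeff, abs_mul, Nat.abs_cast] at h
    rw [le_div_iff₀ (by positivity)]
    linarith
  have hα : 0 ≤ α :=
    (mul_nonneg_iff_of_pos_right (by positivity)).1 ((abs_nonneg _).trans (hderiv 1 le_rfl))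
  have hc : |a 2| ≤ α * γ ^ 2 / 2 := by simpa using ha 1 le_rfl
  have hT := abs_le_of_hasSum_integral_mul_legendreP2_tail hα hγ.le hr.le hrγ
    (fun j hj => ha j (by omega)) (hasSum_integral_mul_legendreP2_tail hf r)
  have hcT : -(α ^ 2 * γ ^ 6 * r ^ 7 / 270) ≤
      a 2 * ((∫ θ in (-r)..r, f θ * legendreP2 r θ) - 8 * r ^ 5 / 45 * a 2) := by
    refine le_trans ?_ (neg_abs_le _)
    rw [neg_le_neg_iff, abs_mul]
    calc |a 2| * |_| ≤ α * γ ^ 2 / 2 * (α * γ ^ 4 * r ^ 7 / 135) := by gcongr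
      _ = α ^ 2 * γ ^ 6 * r ^ 7 / 270 := by ring
  refine le_trans ?_ (le_variance_of_legendreP2 (continuous_of_forall_hasSum hf) hr (a 2))
  rw [hcoeff 2, le_div_iff₀ (by positivity)]
  norm_num [Nat.factorial]
  linear_combination 2 * hcT

/-- Let `f : ℝ → ℝ` be the sum of an everywhere-convergent power series
centered at `0`, with even derivatives at `0` satisfying `|f^(2p)(0)| ≤ α·γ^(2p)` for all
`p ≥ 1`.  Then for `0 < r` with `2γr ≤ 3`, the variance of `f` under the uniform
distribution on `[−r, r]` is at least `(r⁴/45)·(f''(0))² − (α²γ⁶/270)·r⁶`. -/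
theorem stmt3 (α γ : ℝ) (hα : 0 < α) (hγ : 0 < γ)
    (f : ℝ → ℝ) (a : ℕ → ℝ)
    (hf : ∀ x : ℝ, HasSum (fun k : ℕ => a k * x ^ k) (f x))
    (hderiv : ∀ p : ℕ, 1 ≤ p → |iteratedDeriv (2 * p) f 0| ≤ α * γ ^ (2 * p))
    (r : ℝ) (hr : 0 < r) (hrγ : 2 * γ * r ≤ 3) :
    (1 / (2 * r)) * (∫ θ in (-r)..r, (f θ) ^ 2)
        - ((1 / (2 * r)) * ∫ θ in (-r)..r, f θ) ^ 2 ≥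
      (r ^ 4 / 45) * (iteratedDeriv 2 f 0) ^ 2 - (α ^ 2 * γ ^ 6 / 270) * r ^ 6 :=
  stmt3_general α γ hγ f a hf hderiv r hr hrγ
end

section
/- Let P, h_1, …, h_N be N'×N' complex matrices such that the h_j pairwise commute ([h_i, h_j] = 0 for all i, j) and such that each h_j either commutes with P (h_j P = P h_j) or anticommutes with P (h_j P = −P h_j). Let H = Σ_{j=1}^N h_j, let C = { j : h_j P + P h_j = 0 } be the set of indices whose term anticommutes with P, and let H̃ = Σ_{j ∈ C} h_j. Then (i) for every integer p ≥ 1, ad_H^p(P) = ad_{H̃}^p(P); and (ii) if in addition ‖h_j‖ ≤ 1 for all j and ‖P‖ ≤ 1, then ‖ad_H^p(P)‖ ≤ (2·|C|)^p, where |C| is the number of elements of C. -/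
open scoped Matrix.Norms.L2Operator

/-- The `p`-fold nested commutator `ad_H^p(A) = [H, [H, …, [H, A]…]]`. -/
noncomputable def adPow {N' : ℕ} (H : Matrix (Fin N') (Fin N') ℂ) :
    ℕ → Matrix (Fin N') (Fin N') ℂ → Matrix (Fin N') (Fin N') ℂ
  | 0, A => A
  | p + 1, A => H * adPow H p A - adPow H p A * H

/- Since `ad_{H + D} = ad_H + ad_D`, a term `D` commuting with both `P` and `H` drops out of
every nested commutator of `P`: summands commuting with `P` never contribute to `ad_H^p(P)`.
The norm bound is then `‖ad_H(A)‖ ≤ 2‖H‖‖A‖`, iterated, with `‖H̃‖ ≤ |C|`. -/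

variable {n : ℕ}

theorem adPow_succ (H A : Matrix (Fin n) (Fin n) ℂ) (p : ℕ) :
    adPow H (p + 1) A = H * adPow H p A - adPow H p A * H :=
  rfl

theorem Commute.adPow_right {D H A : Matrix (Fin n) (Fin n) ℂ} (hH : Commute D H)
    (hA : Commute D A) (p : ℕ) : Commute D (adPow H p A) := by
  induction p with
  | zero => exact hA
  | succ p ih => exact (hH.mul_right ih).sub_right (ih.mul_right hH)

theorem adPow_add_of_commute {H D A : Matrix (Fin n) (Fin n) ℂ} (hH : Commute D H)
    (hA : Commute D A) (p : ℕ) : adPow (H + D) p A = adPow H p A := by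
  induction p with
  | zero => rfl
  | succ p ih =>
    rw [adPow_succ, adPow_succ, ih, add_mul, mul_add, (hH.adPow_right hA p).eq]
    abel

theorem norm_adPow_le (H A : Matrix (Fin n) (Fin n) ℂ) (p : ℕ) :
    ‖adPow H p A‖ ≤ (2 * ‖H‖) ^ p * ‖A‖ := by
  induction p with
  | zero => simp [adPow]
  | succ p ih =>
    calc ‖adPow H (p + 1) A‖ ≤ ‖H‖ * ‖adPow H p A‖ + ‖adPow H p A‖ * ‖H‖ := by
          rw [adPow_succ]
          exact (norm_sub_le _ _).trans (add_le_add (norm_mul_le _ _) (norm_mul_le _ _))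
      _ = 2 * ‖H‖ * ‖adPow H p A‖ := by ring
      _ ≤ 2 * ‖H‖ * ((2 * ‖H‖) ^ p * ‖A‖) := by gcongr
      _ = (2 * ‖H‖) ^ (p + 1) * ‖A‖ := by ring

/-- Let `P, h_1, …, h_N` be square complex matrices with the `h_j`
pairwise commuting and each `h_j` either commuting or anticommuting with `P`.  With
`H = Σ_j h_j`, `C` the set of indices whose term anticommutes with `P`, and
`H̃ = Σ_{j ∈ C} h_j`, one has (i) `ad_H^p(P) = ad_{H̃}^p(P)` for all `p ≥ 1`; and
(ii) if moreover `‖h_j‖ ≤ 1` for all `j` and `‖P‖ ≤ 1`, then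
`‖ad_H^p(P)‖ ≤ (2·|C|)^p`. -/
theorem stmt6 {N' N : ℕ} (P : Matrix (Fin N') (Fin N') ℂ)
    (h : Fin N → Matrix (Fin N') (Fin N') ℂ)
    (hcomm : ∀ i j, h i * h j = h j * h i)
    (hPcomm : ∀ j, h j * P = P * h j ∨ h j * P = -(P * h j))
    (C : Finset (Fin N)) (hC : ∀ j, j ∈ C ↔ h j * P + P * h j = 0) :
    (∀ p : ℕ, 1 ≤ p →
        adPow (∑ j, h j) p P = adPow (∑ j ∈ C, h j) p P) ∧
    ((∀ j, ‖h j‖ ≤ 1) → ‖P‖ ≤ 1 → ∀ p : ℕ, 1 ≤ p →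
        ‖adPow (∑ j, h j) p P‖ ≤ (2 * (C.card : ℝ)) ^ p) := by
  have hcommP : Commute (∑ j ∈ Cᶜ, h j) P := Commute.sum_left _ _ _ fun j hj =>
    (hPcomm j).resolve_right fun hanti =>
      Finset.mem_compl.mp hj ((hC j).mpr (by rw [hanti, neg_add_cancel]))
  have hcommH : Commute (∑ j ∈ Cᶜ, h j) (∑ j ∈ C, h j) :=
    Commute.sum_left _ _ _ fun i _ => Commute.sum_right _ _ _ fun j _ => hcomm i j
  have hreduce (p : ℕ) : adPow (∑ j, h j) p P = adPow (∑ j ∈ C, h j) p P := by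
    rw [← Finset.sum_add_sum_compl C h, adPow_add_of_commute hcommH hcommP]
  refine ⟨fun p _ => hreduce p, fun hnorm hP p _ => ?_⟩
  have hnormC : ‖∑ j ∈ C, h j‖ ≤ C.card := by
    simpa using norm_sum_le_of_le C fun j _ => hnorm j
  calc ‖adPow (∑ j, h j) p P‖ ≤ (2 * ‖∑ j ∈ C, h j‖) ^ p * ‖P‖ :=
        hreduce p ▸ norm_adPow_le _ _ p
    _ ≤ (2 * (C.card : ℝ)) ^ p * 1 := by gcongr
    _ = (2 * (C.card : ℝ)) ^ p := mul_one _
end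

section
/- Let ρ be an N'×N' density matrix. Let h_1, …, h_N be pairwise commuting N'×N' complex matrices with ‖h_j‖ ≤ 1 for all j, and set H = Σ_{j=1}^N h_j, with H Hermitian. Let P_1, …, P_{N_O} be N'×N' matrices with ‖P_i‖ ≤ 1, and set O = Σ_{i=1}^{N_O} P_i, with O Hermitian. Assume each h_j either commutes or anticommutes with each P_i, and let s := max_{1 ≤ i ≤ N_O} |{ j : h_j P_i + P_i h_j = 0 }|. Define g(θ) = exp(iθH)·O·exp(−iθH) and L(θ) = Re Tr[ρ · g(θ)]. Then for every r > 0 with 4sr ≤ 3, the variance of L under the uniform distribution on [−r, r] satisfies Var[L] ≥ (r⁴/45)·( Re Tr[ρ · g''(0)] )² − ( 32·N_O²·s⁶ / 135 )·r⁶. -/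
open scoped Matrix.Norms.L2Operator
open scoped Matrix
open scoped ComplexOrder

/-!
Put `B = i H` and `D k = ad_B^k O`. Then `g θ = e^{θB} O e^{-θB}`, and its `k`-th derivative is
`e^{θB} (D k) e^{-θB}`, a unitary conjugate of `D k`. For each `P_i`, let `A_i` be the sum of the
(at most `s`) terms `h_j` that anticommute with `P_i`. Then `[H, P_i] = 2 A_i P_i`, and `A_i`
commutes with `H`, so `ad_H^k P_i = (2 A_i)^k P_i`. Hence `‖D k‖ ≤ N_O (2s)^k`, and since `ρ` is a
state, `|L^{(k)}| ≤ N_O (2s)^k`.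

The weight `w θ = θ² - r²/3` has mean zero on `[-r, r]`, so Cauchy–Schwarz gives
`Var L ≥ (∫ L w)² / (2r ∫ w²)` with `∫ w² = 8r⁵/45`. Expand `L` around `0` to fifth order with
Lagrange remainder: only the second and fourth coefficients survive against `w`, and
`∫ L w = 4 L''(0) r⁵/45 + 2 L⁗(0) r⁷/315 + O(N_O (2s)⁶ r⁹)`. Under `4sr ≤ 3` the error terms fit
into the constant `32/135`.
-/

open Finset NormedSpace
open scoped Nat

section IteratedDeriv

variable {E : Type*} [NormedAddCommGroup E] [NormedSpace ℝ E]

theorem iteratedDeriv_eq_of_hasDerivAt_succ {F : ℕ → ℝ → E}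
    (hF : ∀ k t, HasDerivAt (F k) (F (k + 1) t) t) (k : ℕ) : iteratedDeriv k (F 0) = F k := by
  induction k with
  | zero => exact iteratedDeriv_zero
  | succ k ih => rw [iteratedDeriv_succ, ih]; exact funext fun t => (hF k t).deriv

theorem contDiff_of_hasDerivAt_succ {F : ℕ → ℝ → E}
    (hF : ∀ k t, HasDerivAt (F k) (F (k + 1) t) t) (n : ℕ∞) : ContDiff ℝ n (F 0) :=
  contDiff_of_differentiable_iteratedDeriv fun m _ => by
    rw [iteratedDeriv_eq_of_hasDerivAt_succ hF]; exact fun t => (hF m t).differentiableAt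

end IteratedDeriv

theorem abs_sub_taylor_le {f : ℝ → ℝ} {n : ℕ} (hf : ContDiff ℝ (n + 1) f) {r C : ℝ}
    (hC : ∀ t, |t| ≤ r → |iteratedDeriv (n + 1) f t| ≤ C) {t : ℝ} (ht : |t| ≤ r) :
    |f t - ∑ k ∈ range (n + 1), iteratedDeriv k f 0 * t ^ k / k !| ≤
      C * |t| ^ (n + 1) / (n + 1)! := by
  rcases eq_or_ne t 0 with rfl | ht0
  · simp [sum_range_succ']
  obtain ⟨x, hx, hfx⟩ := taylor_mean_remainder_lagrange_iteratedDeriv ht0.symm hf.contDiffOn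
  have htaylor : taylorWithinEval f n (Set.uIcc 0 t) 0 t =
      ∑ k ∈ range (n + 1), iteratedDeriv k f 0 * t ^ k / k ! := by
    rw [taylor_within_apply]
    refine sum_congr rfl fun k hk => ?_
    rw [iteratedDerivWithin_eq_iteratedDeriv (uniqueDiffOn_uIcc ht0.symm)
      (hf.contDiffAt.of_le (by exact_mod_cast (mem_range.mp hk).le)) Set.left_mem_uIcc]
    simp only [smul_eq_mul, sub_zero]
    ring
  have hxt : |x| ≤ |t| := by
    simpa using Set.abs_sub_left_of_mem_uIcc (Set.uIoo_subset_uIcc_self hx)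
  rw [← htaylor, hfx, abs_div, abs_mul, abs_pow, sub_zero, Nat.abs_cast]
  gcongr
  exact hC x (hxt.trans ht)

theorem sq_integral_mul_le_variance {f w : ℝ → ℝ} (hf : Continuous f) (hw : Continuous w)
    {r : ℝ} (hr : 0 < r) (hw0 : ∫ θ in (-r)..r, w θ = 0) :
    (∫ θ in (-r)..r, f θ * w θ) ^ 2 ≤ 2 * r * (∫ θ in (-r)..r, w θ ^ 2) *
      ((1 / (2 * r)) * (∫ θ in (-r)..r, f θ ^ 2) - ((1 / (2 * r)) * ∫ θ in (-r)..r, f θ) ^ 2) := by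
  set μ := (1 / (2 * r)) * ∫ θ in (-r)..r, f θ with hμ
  have hexpand : ∀ l : ℝ, ∫ θ in (-r)..r, (f θ - μ - l * w θ) ^ 2 =
      (∫ θ in (-r)..r, w θ ^ 2) * (l * l) + (-2 * ∫ θ in (-r)..r, f θ * w θ) * l +
        ((∫ θ in (-r)..r, f θ ^ 2) - 2 * μ * (∫ θ in (-r)..r, f θ) + 2 * r * μ ^ 2) := by
    intro l
    have hsq : ∀ θ, (f θ - μ - l * w θ) ^ 2 = f θ ^ 2 - 2 * μ * f θ - 2 * l * (f θ * w θ) +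
        2 * μ * l * w θ + l ^ 2 * w θ ^ 2 + μ ^ 2 := fun θ => by ring
    simp_rw [hsq]
    simp (disch := exact Continuous.intervalIntegrable (by fun_prop) _ _) only
      [intervalIntegral.integral_add, intervalIntegral.integral_sub,
        intervalIntegral.integral_const_mul, intervalIntegral.integral_const, hw0, smul_eq_mul]
    ring
  have hdisc := discrim_le_zero fun l => hexpand l ▸
    intervalIntegral.integral_nonneg (by linarith) fun θ _ => sq_nonneg (f θ - μ - l * w θ)
  have h2r : ∫ θ in (-r)..r, f θ = 2 * r * μ := by rw [hμ]; field_simp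
  have hvar : 2 * r * ((1 / (2 * r)) * (∫ θ in (-r)..r, f θ ^ 2) - μ ^ 2) =
      (∫ θ in (-r)..r, f θ ^ 2) - 2 * r * μ ^ 2 := by field_simp
  rw [discrim, h2r] at hdisc
  rw [mul_assoc, mul_left_comm, hvar]
  linarith

section Weight

variable {r : ℝ}

theorem integral_weight : ∫ θ in (-r)..r, (θ ^ 2 - r ^ 2 / 3) = 0 := by
  simp (disch := exact Continuous.intervalIntegrable (by fun_prop) _ _) only
    [intervalIntegral.integral_sub, integral_pow, intervalIntegral.integral_const, smul_eq_mul]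
  ring

theorem integral_weight_sq : ∫ θ in (-r)..r, (θ ^ 2 - r ^ 2 / 3) ^ 2 = 8 * r ^ 5 / 45 := by
  have hsq : ∀ θ : ℝ, (θ ^ 2 - r ^ 2 / 3) ^ 2 = θ ^ 4 - 2 * r ^ 2 / 3 * θ ^ 2 + r ^ 4 / 9 :=
    fun θ => by ring
  simp_rw [hsq]
  simp (disch := exact Continuous.intervalIntegrable (by fun_prop) _ _) only
    [intervalIntegral.integral_add, intervalIntegral.integral_sub,
      intervalIntegral.integral_const_mul, integral_pow, intervalIntegral.integral_const,
      smul_eq_mul]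
  ring

theorem integral_taylor_mul_weight (c : ℕ → ℝ) :
    ∫ θ in (-r)..r, (∑ k ∈ range 6, c k * θ ^ k / k !) * (θ ^ 2 - r ^ 2 / 3) =
      4 * c 2 * r ^ 5 / 45 + 2 * c 4 * r ^ 7 / 315 := by
  have hmonomial : ∀ k : ℕ, ∫ θ in (-r)..r, θ ^ k * (θ ^ 2 - r ^ 2 / 3) =
      (r ^ (k + 3) - (-r) ^ (k + 3)) / (k + 3) -
        r ^ 2 / 3 * ((r ^ (k + 1) - (-r) ^ (k + 1)) / (k + 1)) := by
    intro k
    simp_rw [mul_sub, ← pow_add, mul_comm (_ ^ k) (r ^ 2 / 3)]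
    simp (disch := exact Continuous.intervalIntegrable (by fun_prop) _ _) only
      [intervalIntegral.integral_sub, intervalIntegral.integral_const_mul, integral_pow]
    push_cast
    ring
  have hterm : ∀ θ : ℝ, (∑ k ∈ range 6, c k * θ ^ k / k !) * (θ ^ 2 - r ^ 2 / 3) =
      ∑ k ∈ range 6, c k / k ! * (θ ^ k * (θ ^ 2 - r ^ 2 / 3)) := fun θ => by
    rw [sum_mul]; exact sum_congr rfl fun k _ => by ring
  simp_rw [hterm]
  rw [intervalIntegral.integral_finsetSum fun k _ =>
    Continuous.intervalIntegrable (by fun_prop) _ _]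
  simp only [intervalIntegral.integral_const_mul, hmonomial, sum_range_succ, sum_range_zero]
  norm_num [Nat.factorial]
  ring

theorem abs_integral_mul_weight_le {R : ℝ → ℝ} (hR : Continuous R) {C : ℝ} (hr : 0 ≤ r)
    (hRC : ∀ θ, |θ| ≤ r → |R θ| ≤ C * θ ^ 6) :
    |∫ θ in (-r)..r, R θ * (θ ^ 2 - r ^ 2 / 3)| ≤ 20 * C * r ^ 9 / 63 := by
  have hweight : ∀ θ : ℝ, |θ ^ 2 - r ^ 2 / 3| ≤ θ ^ 2 + r ^ 2 / 3 := fun θ =>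
    abs_le.mpr ⟨by nlinarith [sq_nonneg θ], by nlinarith [sq_nonneg r]⟩
  calc |∫ θ in (-r)..r, R θ * (θ ^ 2 - r ^ 2 / 3)|
      ≤ ∫ θ in (-r)..r, |R θ * (θ ^ 2 - r ^ 2 / 3)| :=
        intervalIntegral.abs_integral_le_integral_abs (by linarith)
    _ ≤ ∫ θ in (-r)..r, C * θ ^ 6 * (θ ^ 2 + r ^ 2 / 3) := by
        refine intervalIntegral.integral_mono_on (by linarith)
          (Continuous.intervalIntegrable (by fun_prop) _ _)
          (Continuous.intervalIntegrable (by fun_prop) _ _) fun θ hθ => ?_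
        have hRθ := hRC θ (abs_le.mpr hθ)
        rw [abs_mul]
        exact mul_le_mul hRθ (hweight θ) (abs_nonneg _) ((abs_nonneg _).trans hRθ)
    _ = 20 * C * r ^ 9 / 63 := by
        have hpoly : ∀ θ : ℝ, C * θ ^ 6 * (θ ^ 2 + r ^ 2 / 3) =
            C * θ ^ 8 + C * r ^ 2 / 3 * θ ^ 6 := fun θ => by ring
        simp_rw [hpoly]
        simp (disch := exact Continuous.intervalIntegrable (by fun_prop) _ _) only
          [intervalIntegral.integral_add, intervalIntegral.integral_const_mul, integral_pow]
        ring

theorem abs_integral_mul_weight_sub_le {f : ℝ → ℝ} (hf : ContDiff ℝ 6 f) {M K : ℝ}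
    (hr : 0 ≤ r) (hbound : ∀ k t, |iteratedDeriv k f t| ≤ M * K ^ k) :
    |(∫ θ in (-r)..r, f θ * (θ ^ 2 - r ^ 2 / 3)) - 4 * iteratedDeriv 2 f 0 * r ^ 5 / 45| ≤
      2 * M * K ^ 4 * r ^ 7 / 315 + M * K ^ 6 * r ^ 9 / 2268 := by
  set T : ℝ → ℝ := fun θ => ∑ k ∈ range 6, iteratedDeriv k f 0 * θ ^ k / (k !)
  have hT : Continuous T := by fun_prop
  have hfc := hf.continuous
  have hsplit : ∫ θ in (-r)..r, f θ * (θ ^ 2 - r ^ 2 / 3) =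
      (∫ θ in (-r)..r, T θ * (θ ^ 2 - r ^ 2 / 3)) +
        ∫ θ in (-r)..r, (f θ - T θ) * (θ ^ 2 - r ^ 2 / 3) := by
    rw [← intervalIntegral.integral_add]
    · congr 1 with θ
      ring
    all_goals exact Continuous.intervalIntegrable (by fun_prop) _ _
  have hrem := abs_integral_mul_weight_le (R := fun θ => f θ - T θ) (C := M * K ^ 6 / 720)
    (hfc.sub hT) hr fun θ hθ => by
      have := abs_sub_taylor_le (n := 5) hf (fun t _ => hbound 6 t) hθ
      rw [Even.pow_abs (by decide)] at this
      norm_num [Nat.factorial] at this ⊢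
      linarith
  have hc4 := hbound 4 0
  rw [hsplit, integral_taylor_mul_weight]
  calc _ = |2 * r ^ 7 / 315 * iteratedDeriv 4 f 0 +
        ∫ θ in (-r)..r, (f θ - T θ) * (θ ^ 2 - r ^ 2 / 3)| := by ring_nf
    _ ≤ 2 * r ^ 7 / 315 * |iteratedDeriv 4 f 0| +
        |∫ θ in (-r)..r, (f θ - T θ) * (θ ^ 2 - r ^ 2 / 3)| := by
      refine (abs_add_le _ _).trans_eq ?_
      rw [abs_mul, abs_of_nonneg (by positivity)]
    _ ≤ 2 * r ^ 7 / 315 * (M * K ^ 4) + 20 * (M * K ^ 6 / 720) * r ^ 9 / 63 := by gcongr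
    _ = _ := by ring

end Weight

theorem variance_ge_of_abs_iteratedDeriv_le {f : ℝ → ℝ} (hf : ContDiff ℝ 6 f) {r M K : ℝ}
    (hr : 0 < r) (hK : 0 ≤ K) (hKr : K * r ≤ 3 / 2)
    (hbound : ∀ k t, |iteratedDeriv k f t| ≤ M * K ^ k) :
    r ^ 4 / 45 * iteratedDeriv 2 f 0 ^ 2 - M ^ 2 * K ^ 6 / 270 * r ^ 6 ≤
      (1 / (2 * r)) * (∫ θ in (-r)..r, f θ ^ 2) - ((1 / (2 * r)) * ∫ θ in (-r)..r, f θ) ^ 2 := by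
  set V := (1 / (2 * r)) * (∫ θ in (-r)..r, f θ ^ 2) - ((1 / (2 * r)) * ∫ θ in (-r)..r, f θ) ^ 2
  set c := ∫ θ in (-r)..r, f θ * (θ ^ 2 - r ^ 2 / 3)
  set a := 4 * iteratedDeriv 2 f 0 * r ^ 5 / 45
  have hcs : c ^ 2 ≤ 16 * r ^ 6 / 45 * V := by
    have := sq_integral_mul_le_variance hf.continuous (by fun_prop) hr integral_weight
    rw [integral_weight_sq] at this
    linarith
  have hM : 0 ≤ M := (abs_nonneg _).trans (by simpa using hbound 0 0)
  have hKr2 : K ^ 2 * r ^ 2 ≤ 9 / 4 := by nlinarith [mul_nonneg hK hr.le]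
  have hca : |c - a| ≤ 37 / 5040 * M * K ^ 4 * r ^ 7 := by
    refine (abs_integral_mul_weight_sub_le hf hr.le hbound).trans ?_
    have := mul_le_mul_of_nonneg_left hKr2 (by positivity : 0 ≤ M * K ^ 4 * r ^ 7)
    nlinarith
  have ha : |a| ≤ 4 / 45 * M * K ^ 2 * r ^ 5 := by
    have := mul_le_mul_of_nonneg_left (hbound 2 0) (by positivity : 0 ≤ 4 * r ^ 5 / 45)
    rw [show a = 4 * r ^ 5 / 45 * iteratedDeriv 2 f 0 by ring, abs_mul,
      abs_of_nonneg (by positivity)]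
    linarith
  have hprod : |a| * |c - a| ≤ 4 / 45 * M * K ^ 2 * r ^ 5 * (37 / 5040 * M * K ^ 4 * r ^ 7) :=
    mul_le_mul ha hca (abs_nonneg _) (by positivity)
  have hsq : a ^ 2 - 2 * (|a| * |c - a|) ≤ c ^ 2 := by
    have := neg_abs_le (a * (c - a))
    rw [abs_mul] at this
    nlinarith [sq_nonneg (c - a)]
  refine le_of_mul_le_mul_left ?_ (by positivity : (0 : ℝ) < 16 * r ^ 6 / 45)
  calc 16 * r ^ 6 / 45 * (r ^ 4 / 45 * iteratedDeriv 2 f 0 ^ 2 - M ^ 2 * K ^ 6 / 270 * r ^ 6)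
      = a ^ 2 - 16 / 12150 * (M ^ 2 * K ^ 6 * r ^ 12) := by ring
    _ ≤ a ^ 2 - 2 * (|a| * |c - a|) := by
      nlinarith [hprod, (by positivity : 0 ≤ M ^ 2 * K ^ 6 * r ^ 12)]
    _ ≤ 16 * r ^ 6 / 45 * V := hsq.trans hcs

namespace Matrix

variable {n : Type*} [Fintype n] [DecidableEq n]

theorem norm_apply_le_l2_opNorm (A : Matrix n n ℂ) (i j : n) : ‖A i j‖ ≤ ‖A‖ := by
  have h := A.l2_opNorm_mulVec (PiLp.single 2 j (1 : ℂ))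
  rw [PiLp.norm_single, norm_one, mul_one] at h
  refine le_trans (le_of_eq ?_) ((PiLp.norm_apply_le _ i).trans h)
  simp

theorem norm_trace_unitary_conj_diagonal_mul_le {U : Matrix n n ℂ} (hU : U ∈ unitary _)
    {μ : n → ℝ} (hμ : 0 ≤ μ) (M : Matrix n n ℂ) :
    ‖(U * diagonal (Complex.ofReal ∘ μ) * star U * M).trace‖ ≤ (∑ i, μ i) * ‖M‖ := by
  have htrace : (U * diagonal (Complex.ofReal ∘ μ) * star U * M).trace =
      ∑ i, (μ i : ℂ) * (star U * M * U) i i := by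
    simp only [Matrix.mul_assoc]
    rw [trace_mul_comm]
    simp [trace, diagonal_mul, Matrix.mul_assoc]
  have hnorm : ‖star U * M * U‖ = ‖M‖ := by
    rw [CStarRing.norm_mul_mem_unitary _ hU,
      CStarRing.norm_mem_unitary_mul _ (Unitary.star_mem hU)]
  rw [htrace, sum_mul]
  refine (norm_sum_le _ _).trans (sum_le_sum fun i _ => ?_)
  rw [norm_mul, Complex.norm_real, Real.norm_of_nonneg (hμ i), ← hnorm]
  exact mul_le_mul_of_nonneg_left (norm_apply_le_l2_opNorm _ i i) (hμ i)

theorem PosSemidef.norm_trace_mul_le {ρ : Matrix n n ℂ} (hρ : ρ.PosSemidef) (M : Matrix n n ℂ) :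
    ‖(ρ * M).trace‖ ≤ ρ.trace.re * ‖M‖ := by
  have hsum : ρ.trace.re = ∑ i, hρ.isHermitian.eigenvalues i := by
    simp [hρ.isHermitian.trace_eq_sum_eigenvalues]
  have h := norm_trace_unitary_conj_diagonal_mul_le
    (SetLike.coe_mem hρ.isHermitian.eigenvectorUnitary) (fun i => hρ.eigenvalues_nonneg i) M
  rw [hsum]
  convert h using 4
  simpa using hρ.isHermitian.spectral_theorem

theorem PosSemidef.abs_re_trace_mul_le {ρ : Matrix n n ℂ} (hρ : ρ.PosSemidef)
    (hρtr : ρ.trace = 1) (M : Matrix n n ℂ) : |(ρ * M).trace.re| ≤ ‖M‖ :=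
  (Complex.abs_re_le_norm _).trans <| by simpa [hρtr] using hρ.norm_trace_mul_le M

end Matrix

theorem HasDerivAt.re_trace_mul {n : Type*} [Fintype n] [DecidableEq n] {G : ℝ → Matrix n n ℂ}
    {G' : Matrix n n ℂ} {t : ℝ} (hG : HasDerivAt G G' t) (ρ : Matrix n n ℂ) :
    HasDerivAt (fun t => (ρ * G t).trace.re) (ρ * G').trace.re t := by
  have htrace := (((Matrix.traceLinearMap n ℂ ℂ).toContinuousLinearMap).restrictScalars
    ℝ).hasFDerivAt.comp_hasDerivAt t (hG.const_mul ρ)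
  exact Complex.reCLM.hasFDerivAt.comp_hasDerivAt t htrace

theorem hasDerivAt_exp_smul_mul_mul_exp_neg_smul {A : Type*} [NormedRing A] [NormedAlgebra ℝ A]
    [CompleteSpace A] (B X : A) (t : ℝ) :
    HasDerivAt (fun t : ℝ => exp (t • B) * X * exp ((-t) • B))
      (exp (t • B) * ⁅B, X⁆ * exp ((-t) • B)) t := by
  have hU := hasDerivAt_exp_smul_const (𝕂 := ℝ) B t
  have hV := (hasDerivAt_exp_smul_const' (𝕂 := ℝ) B (-t)).scomp t (hasDerivAt_neg t)
  refine ((hU.mul_const X).mul hV).congr_deriv ?_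
  simp only [Function.comp_apply, neg_one_smul, Ring.lie_def]
  noncomm_ring

theorem IsSelfAdjoint.norm_exp_smul_I_smul_conj {A : Type*} [NormedRing A]
    [NormedAlgebra ℂ A] [StarRing A] [CStarRing A] [StarModule ℂ A] [CompleteSpace A] {H : A}
    (hH : IsSelfAdjoint H) (X : A) (t : ℝ) :
    ‖NormedSpace.exp (t • (Complex.I • H)) * X * NormedSpace.exp ((-t) • (Complex.I • H))‖ =
      ‖X‖ := by
  have hU : ∀ u : ℝ, NormedSpace.exp (u • (Complex.I • H)) ∈ unitary A := fun u => by
    have := (selfAdjoint.expUnitary ⟨u • H, (IsSelfAdjoint.all u).smul hH⟩).2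
    rwa [selfAdjoint.expUnitary_coe, smul_comm] at this
  rw [CStarRing.norm_mul_mem_unitary _ (hU _), CStarRing.norm_mem_unitary_mul _ (hU _)]

section Commutator

variable {R : Type*} [Ring R] {ι : Type*}

theorem lie_sum_eq_two_smul_sum_mul [Fintype ι] (h : ι → R) (P : R) (S : Finset ι)
    (hcomm : ∀ j ∉ S, Commute (h j) P) (hanti : ∀ j ∈ S, h j * P + P * h j = 0) :
    ⁅∑ j, h j, P⁆ = 2 • ((∑ j ∈ S, h j) * P) := by
  simp only [Ring.lie_def, sum_mul, mul_sum, ← sum_sub_distrib, smul_sum]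
  rw [← sum_subset (subset_univ S) fun j _ hj => by rw [(hcomm j hj).eq, sub_self]]
  refine sum_congr rfl fun j hj => ?_
  rw [eq_neg_of_add_eq_zero_right (hanti j hj), sub_neg_eq_add, two_smul]

theorem lie_iterate_sum (B : R) (s : Finset ι) (P : ι → R) (k : ℕ) :
    (fun X => ⁅B, X⁆)^[k] (∑ i ∈ s, P i) = ∑ i ∈ s, (fun X => ⁅B, X⁆)^[k] (P i) := by
  induction k with
  | zero => rfl
  | succ k ih =>
    rw [Function.iterate_succ_apply', ih, Ring.lie_def, mul_sum, sum_mul, ← sum_sub_distrib]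
    simp only [Function.iterate_succ_apply', Ring.lie_def]

theorem lie_iterate_eq_pow_smul {S : Type*} [CommSemiring S] [Algebra S R] {B A P : R} {c : S}
    (hBA : Commute B A) (hBP : ⁅B, P⁆ = c • (A * P)) (k : ℕ) :
    (fun X => ⁅B, X⁆)^[k] P = c ^ k • (A ^ k * P) := by
  induction k with
  | zero => simp
  | succ k ih =>
    have hlie : ⁅B, A ^ k * P⁆ = A ^ k * ⁅B, P⁆ := by
      simp only [Ring.lie_def, mul_sub, ← mul_assoc, (hBA.pow_right k).eq]
    rw [Function.iterate_succ_apply', ih, Ring.lie_def, mul_smul_comm, smul_mul_assoc,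
      ← smul_sub, ← Ring.lie_def, hlie, hBP, mul_smul_comm, smul_smul, ← mul_assoc, ← pow_succ,
      ← pow_succ]

end Commutator

theorem norm_pow_mul_le {R : Type*} [NormedRing R] (A P : R) (k : ℕ) :
    ‖A ^ k * P‖ ≤ ‖A‖ ^ k * ‖P‖ := by
  induction k with
  | zero => simp
  | succ k ih =>
    calc ‖A ^ (k + 1) * P‖ ≤ ‖A‖ * ‖A ^ k * P‖ := by
          rw [pow_succ', mul_assoc]; exact norm_mul_le _ _
      _ ≤ ‖A‖ ^ (k + 1) * ‖P‖ := by rw [pow_succ', mul_assoc]; gcongr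

section NormedCommutator

variable {R : Type*} [NormedRing R] [NormedAlgebra ℂ R] {ι : Type*} [Fintype ι] (h : ι → R)
  (z : ℂ)

theorem norm_lie_iterate_le (hcomm : ∀ i j, Commute (h i) (h j)) (hnorm : ∀ j, ‖h j‖ ≤ 1)
    (P : R) (hca : ∀ j, Commute (h j) P ∨ h j * P = -(P * h j)) (k : ℕ) :
    ‖(fun X => ⁅z • ∑ j, h j, X⁆)^[k] P‖ ≤
      (2 * ‖z‖ * {j | h j * P + P * h j = 0}.ncard) ^ k * ‖P‖ := by
  classical
  set S := univ.filter fun j => h j * P + P * h j = 0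
  set A := ∑ j ∈ S, h j
  have hcard : {j | h j * P + P * h j = 0}.ncard = S.card := by
    rw [← Set.ncard_coe_finset]; simp [S]
  have hA : ‖A‖ ≤ S.card :=
    (norm_sum_le _ _).trans (by simpa using sum_le_sum fun j (_ : j ∈ S) => hnorm j)
  have hHP : ⁅∑ j, h j, P⁆ = 2 • (A * P) :=
    lie_sum_eq_two_smul_sum_mul h P S
      (fun j hj => (hca j).resolve_right fun hj' => hj (by simp [S, hj']))
      (fun j hj => (mem_filter.mp hj).2)
  have hBP : ⁅z • ∑ j, h j, P⁆ = (2 * z) • (A * P) := by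
    rw [Ring.lie_def, smul_mul_assoc, mul_smul_comm, ← smul_sub, ← Ring.lie_def, hHP,
      two_smul, two_mul, add_smul, smul_add]
  have hBA : Commute (z • ∑ j, h j) A :=
    (Commute.sum_left _ _ _ fun i _ => Commute.sum_right _ _ _ fun j _ => hcomm i j).smul_left z
  rw [lie_iterate_eq_pow_smul hBA hBP, norm_smul, norm_pow, hcard, mul_pow, mul_assoc]
  gcongr
  · simp
  · exact (norm_pow_mul_le A P k).trans (by gcongr)

theorem norm_lie_iterate_sum_le (hcomm : ∀ i j, Commute (h i) (h j)) (hnorm : ∀ j, ‖h j‖ ≤ 1)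
    {κ : Type*} [Fintype κ] (P : κ → R) (hPnorm : ∀ i, ‖P i‖ ≤ 1)
    (hca : ∀ j i, Commute (h j) (P i) ∨ h j * P i = -(P i * h j)) {s : ℕ}
    (hs : ∀ i, {j | h j * P i + P i * h j = 0}.ncard ≤ s) (k : ℕ) :
    ‖(fun X => ⁅z • ∑ j, h j, X⁆)^[k] (∑ i, P i)‖ ≤
      Fintype.card κ * (2 * ‖z‖ * s) ^ k := by
  rw [lie_iterate_sum, ← nsmul_eq_mul, ← card_univ, ← sum_const]
  refine (norm_sum_le _ _).trans (sum_le_sum fun i _ =>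
    (norm_lie_iterate_le h z hcomm hnorm (P i) (hca · i) k).trans ?_)
  rw [← mul_one ((2 * ‖z‖ * s) ^ k)]
  gcongr
  · exact_mod_cast hs i
  · exact hPnorm i

end NormedCommutator

theorem stmt11_general {N' N NO : ℕ}
    (ρ : Matrix (Fin N') (Fin N') ℂ) (hρ : ρ.PosSemidef) (hρtr : ρ.trace = 1)
    (h : Fin N → Matrix (Fin N') (Fin N') ℂ)
    (hcomm : ∀ i j, h i * h j = h j * h i)
    (hnorm : ∀ j, ‖h j‖ ≤ 1)
    (H : Matrix (Fin N') (Fin N') ℂ) (hHdef : H = ∑ j, h j) (hH : H.IsHermitian)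
    (P : Fin NO → Matrix (Fin N') (Fin N') ℂ) (hPnorm : ∀ i, ‖P i‖ ≤ 1)
    (O : Matrix (Fin N') (Fin N') ℂ) (hOdef : O = ∑ i, P i)
    (hca : ∀ j i, h j * P i = P i * h j ∨ h j * P i = -(P i * h j))
    (s : ℕ)
    (hs : s = Finset.univ.sup fun i : Fin NO =>
      Set.ncard {j : Fin N | h j * P i + P i * h j = 0})
    (g : ℝ → Matrix (Fin N') (Fin N') ℂ)
    (hg : ∀ θ : ℝ, g θ = NormedSpace.exp ((Complex.I * (θ : ℂ)) • H) * O *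
        NormedSpace.exp ((-(Complex.I * (θ : ℂ))) • H))
    (L : ℝ → ℝ) (hL : ∀ θ, L θ = ((ρ * g θ).trace).re)
    (r : ℝ) (hr : 0 < r) (hrs : 4 * (s : ℝ) * r ≤ 3) :
    (1 / (2 * r)) * (∫ θ in (-r)..r, (L θ) ^ 2) -
        ((1 / (2 * r)) * ∫ θ in (-r)..r, L θ) ^ 2 ≥
      (r ^ 4 / 45) * (((ρ * iteratedDeriv 2 g 0).trace).re) ^ 2 -
        (32 * (NO : ℝ) ^ 2 * (s : ℝ) ^ 6 / 135) * r ^ 6 := by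
  subst hHdef hOdef
  set B := Complex.I • ∑ j, h j
  set D : ℕ → Matrix (Fin N') (Fin N') ℂ := fun k => (fun X => ⁅B, X⁆)^[k] (∑ i, P i)
  have hgB : g = fun θ : ℝ => exp (θ • B) * D 0 * exp ((-θ) • B) := funext fun θ => by
    rw [hg θ, neg_smul, mul_comm Complex.I, ← smul_smul, Complex.coe_smul, neg_smul]
    rfl
  have hG : ∀ k (θ : ℝ), HasDerivAt (fun θ => exp (θ • B) * D k * exp ((-θ) • B))
      (exp (θ • B) * D (k + 1) * exp ((-θ) • B)) θ := fun k θ => by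
    simpa only [D, Function.iterate_succ_apply'] using
      hasDerivAt_exp_smul_mul_mul_exp_neg_smul B (D k) θ
  have hchain := fun k θ => (hG k θ).re_trace_mul ρ
  have hL0 : L = fun θ => (ρ * (exp (θ • B) * D 0 * exp ((-θ) • B))).trace.re :=
    funext fun θ => by rw [hL, hgB]
  have hbound : ∀ k θ, |iteratedDeriv k L θ| ≤ NO * (2 * s) ^ k := fun k θ => by
    rw [hL0, iteratedDeriv_eq_of_hasDerivAt_succ hchain]
    refine ((hρ.abs_re_trace_mul_le hρtr _).trans_eq
      (hH.isSelfAdjoint.norm_exp_smul_I_smul_conj _ θ)).trans ?_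
    simpa using norm_lie_iterate_sum_le h Complex.I hcomm hnorm P hPnorm hca (fun i => hs ▸
      le_sup (f := fun i => Set.ncard {j | h j * P i + P i * h j = 0}) (mem_univ i)) k
  have h2 : (ρ * iteratedDeriv 2 g 0).trace.re = iteratedDeriv 2 L 0 := by
    rw [hL0, hgB, iteratedDeriv_eq_of_hasDerivAt_succ hchain,
      iteratedDeriv_eq_of_hasDerivAt_succ hG]
  have hvar := variance_ge_of_abs_iteratedDeriv_le (hL0 ▸ contDiff_of_hasDerivAt_succ hchain 6)
    hr (by positivity) (by linarith) hbound
  rw [ge_iff_le, h2]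
  convert hvar using 2
  ring

/-- Variance lower bound for a single-generator channel under locality
assumptions: `H = Σ_j h_j` with pairwise-commuting normalized terms, `O = Σ_i P_i` with
normalized terms, each `h_j` commuting or anticommuting with each `P_i`, and
`s = max_i #{j : h_j anticommutes with P_i}`.  With `g(θ) = exp(iθH)·O·exp(−iθH)` and
`L(θ) = Re Tr[ρ·g(θ)]`, whenever `4sr ≤ 3` the variance of `L` on the uniform
distribution over `[−r, r]` is at least
`(r⁴/45)(Re Tr[ρ·g''(0)])² − (32·N_O²·s⁶/135)·r⁶`. -/
theorem stmt11 {N' N NO : ℕ} [NeZero N']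
    (ρ : Matrix (Fin N') (Fin N') ℂ) (hρ : ρ.PosSemidef) (hρtr : ρ.trace = 1)
    (h : Fin N → Matrix (Fin N') (Fin N') ℂ)
    (hcomm : ∀ i j, h i * h j = h j * h i)
    (hnorm : ∀ j, ‖h j‖ ≤ 1)
    (H : Matrix (Fin N') (Fin N') ℂ) (hHdef : H = ∑ j, h j) (hH : H.IsHermitian)
    (P : Fin NO → Matrix (Fin N') (Fin N') ℂ) (hPnorm : ∀ i, ‖P i‖ ≤ 1)
    (O : Matrix (Fin N') (Fin N') ℂ) (hOdef : O = ∑ i, P i) (hO : O.IsHermitian)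
    (hca : ∀ j i, h j * P i = P i * h j ∨ h j * P i = -(P i * h j))
    (s : ℕ)
    (hs : s = Finset.univ.sup fun i : Fin NO =>
      Set.ncard {j : Fin N | h j * P i + P i * h j = 0})
    (g : ℝ → Matrix (Fin N') (Fin N') ℂ)
    (hg : ∀ θ : ℝ, g θ = NormedSpace.exp ((Complex.I * (θ : ℂ)) • H) * O *
        NormedSpace.exp ((-(Complex.I * (θ : ℂ))) • H))
    (L : ℝ → ℝ) (hL : ∀ θ, L θ = ((ρ * g θ).trace).re)
    (r : ℝ) (hr : 0 < r) (hrs : 4 * (s : ℝ) * r ≤ 3) :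
    (1 / (2 * r)) * (∫ θ in (-r)..r, (L θ) ^ 2) -
        ((1 / (2 * r)) * ∫ θ in (-r)..r, L θ) ^ 2 ≥
      (r ^ 4 / 45) * (((ρ * iteratedDeriv 2 g 0).trace).re) ^ 2 -
        (32 * (NO : ℝ) ^ 2 * (s : ℝ) ^ 6 / 135) * r ^ 6 :=
  stmt11_general ρ hρ hρtr h hcomm hnorm H hHdef hH P hPnorm O hOdef hca s hs g hg L hL r hr hrs
end

section
/- Let H be an N×N Hermitian complex matrix, let u, v ∈ ℂ^N be orthonormal vectors, and let k₁, ε ∈ ℂ satisfy |k₁|² + |ε|² = 1 and |ε| ≤ |k₁|. Set ψ = k₁·u + ε·v. Then |k₁|²·( ⟨u, H²u⟩ − (⟨u, Hu⟩)² ) ≥ ( ⟨ψ, H²ψ⟩ − (⟨ψ, Hψ⟩)² ) − 11·|ε|·‖H‖². -/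
open scoped Matrix.Norms.L2Operator
open scoped Matrix

/-!
Expanding `ψ = k₁ u + ε v`, each quadratic form `⟨ψ, M ψ⟩` differs from `|k₁|² ⟨u, M u⟩` by cross
terms of size at most `3 |ε| ‖M‖` (Cauchy–Schwarz against the operator norm). Applied to `M = H`
and `M = H²`, this compares the two variances up to `9 |ε| ‖H‖²`; the remaining discrepancy is
`|k₁|² (1 - |k₁|²) ⟨u, H u⟩² = |k₁|² |ε|² ⟨u, H u⟩² ≤ |ε| ‖H‖²`.
-/

lemma EuclideanSpace.norm_toLp_eq_one {𝕜 n : Type*} [RCLike 𝕜] [Fintype n] {x : n → 𝕜}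
    (hx : star x ⬝ᵥ x = 1) : ‖WithLp.toLp 2 x‖ = 1 := by
  have h : (‖WithLp.toLp 2 x‖ : 𝕜) ^ 2 = 1 := by
    rw [← inner_self_eq_norm_sq_to_K, EuclideanSpace.inner_toLp_toLp, dotProduct_comm, hx]
  exact (pow_eq_one_iff_of_nonneg (norm_nonneg _) two_ne_zero).1 (by exact_mod_cast h)

lemma Matrix.norm_dotProduct_mulVec_le_l2_opNorm {𝕜 m n : Type*} [RCLike 𝕜] [Fintype m]
    [Fintype n] [DecidableEq n] (M : Matrix m n 𝕜) {x : m → 𝕜} {y : n → 𝕜}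
    (hx : star x ⬝ᵥ x = 1) (hy : star y ⬝ᵥ y = 1) :
    ‖star x ⬝ᵥ (M *ᵥ y)‖ ≤ ‖M‖ := by
  have hMy := M.l2_opNorm_mulVec (WithLp.toLp 2 y)
  rw [EuclideanSpace.norm_toLp_eq_one hy, mul_one] at hMy
  calc ‖star x ⬝ᵥ (M *ᵥ y)‖
      = ‖inner 𝕜 (WithLp.toLp 2 x) (WithLp.toLp 2 (M *ᵥ y))‖ := by
        rw [EuclideanSpace.inner_toLp_toLp, dotProduct_comm]
    _ ≤ ‖WithLp.toLp 2 x‖ * ‖WithLp.toLp 2 (M *ᵥ y)‖ := norm_inner_le_norm _ _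
    _ ≤ ‖M‖ := by rw [EuclideanSpace.norm_toLp_eq_one hx, one_mul]; exact hMy

section

variable {n : Type*} [Fintype n]

lemma dotProduct_mulVec_smul_add_smul (M : Matrix n n ℂ) (u v : n → ℂ) (k ε : ℂ) :
    star (k • u + ε • v) ⬝ᵥ (M *ᵥ (k • u + ε • v)) =
      ((‖k‖ ^ 2 : ℝ) : ℂ) * (star u ⬝ᵥ (M *ᵥ u)) +
        (star k * ε * (star u ⬝ᵥ (M *ᵥ v)) + star ε * k * (star v ⬝ᵥ (M *ᵥ u)) +
          star ε * ε * (star v ⬝ᵥ (M *ᵥ v))) := by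
  have hk : ((‖k‖ ^ 2 : ℝ) : ℂ) = star k * k := by
    rw [Complex.ofReal_pow, RCLike.star_def, Complex.conj_mul']
  simp only [hk, star_add, star_smul, Matrix.mulVec_add, Matrix.mulVec_smul, add_dotProduct,
    smul_dotProduct, dotProduct_add, dotProduct_smul, smul_eq_mul]
  ring

variable [DecidableEq n]

lemma abs_re_dotProduct_mulVec_smul_add_smul_sub_le (M : Matrix n n ℂ) {u v : n → ℂ}
    (hu : star u ⬝ᵥ u = 1) (hv : star v ⬝ᵥ v = 1) {k ε : ℂ} (hk : ‖k‖ ≤ 1) (hε : ‖ε‖ ≤ 1) :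
    |(star (k • u + ε • v) ⬝ᵥ (M *ᵥ (k • u + ε • v))).re - ‖k‖ ^ 2 * (star u ⬝ᵥ (M *ᵥ u)).re|
      ≤ 3 * ‖ε‖ * ‖M‖ := by
  have huv := M.norm_dotProduct_mulVec_le_l2_opNorm hu hv
  have hvu := M.norm_dotProduct_mulVec_le_l2_opNorm hv hu
  have hvv := M.norm_dotProduct_mulVec_le_l2_opNorm hv hv
  rw [dotProduct_mulVec_smul_add_smul, Complex.add_re, Complex.re_ofReal_mul, add_sub_cancel_left]
  refine (Complex.abs_re_le_norm _).trans ?_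
  refine (norm_add₃_le).trans ?_
  simp only [norm_mul, norm_star]
  have hε0 := norm_nonneg ε
  calc ‖k‖ * ‖ε‖ * ‖star u ⬝ᵥ (M *ᵥ v)‖ + ‖ε‖ * ‖k‖ * ‖star v ⬝ᵥ (M *ᵥ u)‖
        + ‖ε‖ * ‖ε‖ * ‖star v ⬝ᵥ (M *ᵥ v)‖
      ≤ 1 * ‖ε‖ * ‖M‖ + ‖ε‖ * 1 * ‖M‖ + ‖ε‖ * 1 * ‖M‖ := by gcongr
    _ = 3 * ‖ε‖ * ‖M‖ := by ring

end

lemma variance_perturbation_bound {a b c e n A B : ℝ} (he : 0 ≤ e)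
    (hce : c ^ 2 + e ^ 2 = 1) (hb : |b| ≤ n)
    (hA : |A - c ^ 2 * a| ≤ 3 * e * n ^ 2) (hB : |B - c ^ 2 * b| ≤ 3 * e * n) :
    A - B ^ 2 - 11 * e * n ^ 2 ≤ c ^ 2 * (a - b ^ 2) := by
  have hc2 : c ^ 2 ≤ 1 := by nlinarith
  have he1 : e ≤ 1 := by nlinarith
  have hb2 : b ^ 2 ≤ n ^ 2 := sq_le_sq' (abs_le.1 hb).1 (abs_le.1 hb).2
  have hn : 0 ≤ n := (abs_nonneg b).trans hb
  have hcross : |2 * c ^ 2 * b * (B - c ^ 2 * b)| ≤ 6 * e * n ^ 2 := by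
    rw [abs_mul, abs_mul, abs_mul, abs_of_nonneg (by positivity : (0 : ℝ) ≤ 2),
      abs_of_nonneg (sq_nonneg c)]
    calc 2 * c ^ 2 * |b| * |B - c ^ 2 * b| ≤ 2 * 1 * n * (3 * e * n) := by gcongr
      _ = 6 * e * n ^ 2 := by ring
  have hsq : c ^ 4 * b ^ 2 + 2 * c ^ 2 * b * (B - c ^ 2 * b) ≤ B ^ 2 := by
    nlinarith [sq_nonneg (B - c ^ 2 * b)]
  have hshrink : c ^ 2 * b ^ 2 - c ^ 4 * b ^ 2 ≤ e * n ^ 2 := by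
    have : c ^ 2 * b ^ 2 - c ^ 4 * b ^ 2 = e ^ 2 * (c ^ 2 * b ^ 2) := by
      linear_combination (-(c ^ 2 * b ^ 2)) * hce
    rw [this]
    calc e ^ 2 * (c ^ 2 * b ^ 2) ≤ e * (1 * n ^ 2) := by
          rw [sq e]; gcongr; exact mul_le_of_le_one_left he he1
      _ = e * n ^ 2 := by ring
  have hen : 0 ≤ e * n ^ 2 := by positivity
  linarith [abs_le.1 hA, abs_le.1 hcross]

theorem stmt18_general {N : ℕ} (H : Matrix (Fin N) (Fin N) ℂ)
    (u v : Fin N → ℂ)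
    (hu : star u ⬝ᵥ u = 1) (hv : star v ⬝ᵥ v = 1)
    (k₁ ε : ℂ) (hnorm : ‖k₁‖ ^ 2 + ‖ε‖ ^ 2 = 1)
    (ψ : Fin N → ℂ) (hψ : ψ = k₁ • u + ε • v) :
    (‖k₁‖) ^ 2 *
        ((star u ⬝ᵥ ((H * H) *ᵥ u)).re - ((star u ⬝ᵥ (H *ᵥ u)).re) ^ 2) ≥
      ((star ψ ⬝ᵥ ((H * H) *ᵥ ψ)).re - ((star ψ ⬝ᵥ (H *ᵥ ψ)).re) ^ 2) -
        11 * ‖ε‖ * ‖H‖ ^ 2 := by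
  subst hψ
  have hk : ‖k₁‖ ≤ 1 := by nlinarith [norm_nonneg ε]
  have hε : ‖ε‖ ≤ 1 := by nlinarith [norm_nonneg k₁]
  have hHH : ‖H * H‖ ≤ ‖H‖ ^ 2 := (Matrix.l2_opNorm_mul H H).trans_eq (sq _).symm
  have hA := abs_re_dotProduct_mulVec_smul_add_smul_sub_le (H * H) hu hv hk hε
  have hB := abs_re_dotProduct_mulVec_smul_add_smul_sub_le H hu hv hk hε
  have hb : |(star u ⬝ᵥ (H *ᵥ u)).re| ≤ ‖H‖ :=
    (Complex.abs_re_le_norm _).trans (H.norm_dotProduct_mulVec_le_l2_opNorm hu hu)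
  exact variance_perturbation_bound (norm_nonneg ε) hnorm hb
    (hA.trans (by gcongr)) hB

/-- For a Hermitian matrix `H`, orthonormal vectors `u, v`, and
`ψ = k₁·u + ε·v` with `|k₁|² + |ε|² = 1` and `|ε| ≤ |k₁|`:
`|k₁|²·Var_u(H) ≥ Var_ψ(H) − 11|ε|·‖H‖²`, where
`Var_x(H) = ⟨x, H²x⟩ − ⟨x, Hx⟩²`. -/
theorem stmt18 {N : ℕ} (H : Matrix (Fin N) (Fin N) ℂ) (hH : H.IsHermitian)
    (u v : Fin N → ℂ)
    (hu : star u ⬝ᵥ u = 1) (hv : star v ⬝ᵥ v = 1) (huv : star u ⬝ᵥ v = 0)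
    (k₁ ε : ℂ) (hnorm : ‖k₁‖ ^ 2 + ‖ε‖ ^ 2 = 1)
    (hle : ‖ε‖ ≤ ‖k₁‖)
    (ψ : Fin N → ℂ) (hψ : ψ = k₁ • u + ε • v) :
    (‖k₁‖) ^ 2 *
        ((star u ⬝ᵥ ((H * H) *ᵥ u)).re - ((star u ⬝ᵥ (H *ᵥ u)).re) ^ 2) ≥
      ((star ψ ⬝ᵥ ((H * H) *ᵥ ψ)).re - ((star ψ ⬝ᵥ (H *ᵥ ψ)).re) ^ 2) -
        11 * ‖ε‖ * ‖H‖ ^ 2 :=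
  stmt18_general H u v hu hv k₁ ε hnorm ψ hψ
end
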